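/- arXiv:gr-qc/0401010 — 5 statements merged into one kernel-verified Lean document; each statement's English description precedes it below -/
import Mathlib

section
/- Let T be a rank p tensor on n-dimensional Minkowski space, and let ℓ, n, m_i and ℓ̂, n̂, m̂_i be two null frames such that ℓ̂ is a nonzero scalar multiple of ℓ. Then the boost order of T relative to the first frame equals the boost order of T relative to the second frame. -/
open scoped BigOperators Matrix

/-- The Minkowski metric matrix of signature (-,+,...,+). -/
noncomputable def minkMetric (n : ℕ) : Matrix (Fin n) (Fin n) ℝ :=
  Matrix.diagonal (fun i => if (i : ℕ) = 0 then -1 else 1)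

/-- Minkowski inner product on ℝ^n. -/
noncomputable def mip {n : ℕ} (u v : Fin n → ℝ) : ℝ :=
  u ⬝ᵥ (minkMetric n).mulVec v

/-- A null frame: `e 0 = ℓ`, `e 1 = n`, and the remaining `e i` space-like. -/
def IsNullFrame {k : ℕ} (e : Fin (k+2) → (Fin (k+2) → ℝ)) : Prop :=
  mip (e 0) (e 1) = 1 ∧ mip (e 0) (e 0) = 0 ∧ mip (e 1) (e 1) = 0 ∧
  (∀ i : Fin (k+2), 2 ≤ (i : ℕ) → mip (e 0) (e i) = 0) ∧
  (∀ i : Fin (k+2), 2 ≤ (i : ℕ) → mip (e 1) (e i) = 0) ∧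
  (∀ i j : Fin (k+2), 2 ≤ (i : ℕ) → 2 ≤ (j : ℕ) →
    mip (e i) (e j) = if i = j then 1 else 0)

/-- Boost weight of a multi-index: number of `0` indices minus number of `1` indices. -/
def boostWeight {n p : ℕ} (A : Fin p → Fin n) [NeZero n] : ℤ :=
  ((Finset.univ.filter (fun t => (A t : ℕ) = 0)).card : ℤ)
    - ((Finset.univ.filter (fun t => (A t : ℕ) = 1)).card : ℤ)

/- ===================== auxiliary material ===================== -/

lemma mip_eq_sum {n : ℕ} (u v : Fin n → ℝ) :
    mip u v = ∑ i, u i * ((if (i : ℕ) = 0 then (-1:ℝ) else 1) * v i) := by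
  simp [mip, dotProduct, minkMetric, Matrix.mulVec_diagonal]

lemma mip_comm {n : ℕ} (u v : Fin n → ℝ) : mip u v = mip v u := by
  rw [mip_eq_sum, mip_eq_sum]
  exact Finset.sum_congr rfl fun i _ => by ring

lemma mip_smul_left {n : ℕ} (a : ℝ) (u v : Fin n → ℝ) :
    mip (a • u) v = a * mip u v := by
  simp [mip, smul_dotProduct, smul_eq_mul]

/-- `mip (·, v)` as a linear map. -/
noncomputable def mipL {n : ℕ} (v : Fin n → ℝ) : (Fin n → ℝ) →ₗ[ℝ] ℝ where
  toFun u := mip u v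
  map_add' x y := by simp [mip, add_dotProduct]
  map_smul' a x := by simp [mip, smul_dotProduct, smul_eq_mul]

lemma mipL_apply {n : ℕ} (v u : Fin n → ℝ) : mipL v u = mip u v := rfl

lemma fin_two_le {k : ℕ} (i : Fin (k+2)) (h0 : i ≠ 0) (h1 : i ≠ 1) : 2 ≤ (i : ℕ) := by
  have v0 : ((0 : Fin (k+2)) : ℕ) = 0 := rfl
  have v1 : ((1 : Fin (k+2)) : ℕ) = 1 := rfl
  rw [Fin.ne_iff_vne, v0] at h0
  rw [Fin.ne_iff_vne, v1] at h1
  omega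

/-- The Gram matrix of a null frame. -/
lemma gram {k : ℕ} {e : Fin (k+2) → (Fin (k+2) → ℝ)} (he : IsNullFrame e)
    (i j : Fin (k+2)) :
    mip (e i) (e j) = if i = Equiv.swap (0 : Fin (k+2)) 1 j then 1 else 0 := by
  obtain ⟨h01, h00, h11, h0i, h1i, hij⟩ := he
  by_cases hi0 : i = 0
  · by_cases hj0 : j = 0
    · subst hi0; subst hj0; simp [Equiv.swap_apply_left, h00]
    · by_cases hj1 : j = 1
      · subst hi0; subst hj1; simp [Equiv.swap_apply_right, h01]
      · have hj2 := fin_two_le j hj0 hj1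
        subst hi0
        rw [Equiv.swap_apply_of_ne_of_ne hj0 hj1]
        simp [h0i j hj2, Ne.symm hj0]
  · by_cases hi1 : i = 1
    · by_cases hj0 : j = 0
      · subst hi1; subst hj0; simp [Equiv.swap_apply_left, mip_comm (e 1) (e 0), h01]
      · by_cases hj1 : j = 1
        · subst hi1; subst hj1; simp [Equiv.swap_apply_right, h11]
        · have hj2 := fin_two_le j hj0 hj1
          subst hi1
          rw [Equiv.swap_apply_of_ne_of_ne hj0 hj1]
          simp [h1i j hj2, Ne.symm hj1]
    · have hi2 := fin_two_le i hi0 hi1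
      by_cases hj0 : j = 0
      · subst hj0
        rw [Equiv.swap_apply_left, mip_comm, h0i i hi2, if_neg hi1]
      · by_cases hj1 : j = 1
        · subst hj1
          rw [Equiv.swap_apply_right, mip_comm, h1i i hi2, if_neg hi0]
        · have hj2 := fin_two_le j hj0 hj1
          rw [Equiv.swap_apply_of_ne_of_ne hj0 hj1]
          exact hij i j hi2 hj2

lemma mip_sum_frame {k : ℕ} {e : Fin (k+2) → (Fin (k+2) → ℝ)} (he : IsNullFrame e)
    (g : Fin (k+2) → ℝ) (j : Fin (k+2)) :
    mip (∑ B, g B • e B) (e j) = g (Equiv.swap (0 : Fin (k+2)) 1 j) := by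
  have h := map_sum (mipL (e j)) (fun B => g B • e B) Finset.univ
  simp only [mipL_apply, mip_smul_left] at h
  rw [h]
  simp only [gram he, mul_ite, mul_one, mul_zero]
  simp [Finset.sum_ite_eq']

lemma frame_li {k : ℕ} {e : Fin (k+2) → (Fin (k+2) → ℝ)} (he : IsNullFrame e) :
    LinearIndependent ℝ e := by
  rw [Fintype.linearIndependent_iff]
  intro g hg i
  have h := mip_sum_frame he g (Equiv.swap (0 : Fin (k+2)) 1 i)
  rw [hg, Equiv.swap_apply_self] at h
  have h0 : mip (0 : Fin (k+2) → ℝ) (e (Equiv.swap (0 : Fin (k+2)) 1 i)) = 0 := by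
    simp [mip, zero_dotProduct]
  rw [h0] at h
  exact h.symm

/-- A null frame is a basis. -/
noncomputable def frameBasis {k : ℕ} {e : Fin (k+2) → (Fin (k+2) → ℝ)}
    (he : IsNullFrame e) : Module.Basis (Fin (k+2)) ℝ (Fin (k+2) → ℝ) :=
  basisOfLinearIndependentOfCardEqFinrank (frame_li he)
    (by simp [Module.finrank_fin_fun])

lemma frameBasis_apply {k : ℕ} {e : Fin (k+2) → (Fin (k+2) → ℝ)}
    (he : IsNullFrame e) (i : Fin (k+2)) : frameBasis he i = e i := by
  simp [frameBasis, coe_basisOfLinearIndependentOfCardEqFinrank]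

lemma repr_eq_mip {k : ℕ} {e : Fin (k+2) → (Fin (k+2) → ℝ)} (he : IsNullFrame e)
    (v : Fin (k+2) → ℝ) (j : Fin (k+2)) :
    (frameBasis he).repr v j = mip v (e (Equiv.swap (0 : Fin (k+2)) 1 j)) := by
  conv_rhs => rw [← Module.Basis.sum_repr (frameBasis he) v]
  simp only [frameBasis_apply he]
  rw [mip_sum_frame he, Equiv.swap_apply_self]

/-- Boost weight of a single index. -/
def wt {k : ℕ} (i : Fin (k+2)) : ℤ := if i = 0 then 1 else if i = 1 then -1 else 0

lemma wt_le_one {k : ℕ} (i : Fin (k+2)) : wt i ≤ 1 := by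
  unfold wt; split_ifs <;> norm_num

lemma neg_one_le_wt {k : ℕ} (i : Fin (k+2)) : -1 ≤ wt i := by
  unfold wt; split_ifs <;> norm_num

lemma boostWeight_eq_sum {k p : ℕ} (A : Fin p → Fin (k+2)) :
    boostWeight A = ∑ t, wt (A t) := by
  unfold boostWeight
  rw [Finset.card_filter, Finset.card_filter]
  push_cast
  rw [← Finset.sum_sub_distrib]
  refine Finset.sum_congr rfl fun t _ => ?_
  unfold wt
  have v0 : ((0 : Fin (k+2)) : ℕ) = 0 := rfl
  have v1 : ((1 : Fin (k+2)) : ℕ) = 1 := rfl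
  by_cases h0 : A t = 0
  · rw [h0]; simp
  · by_cases h1 : A t = 1
    · rw [h1]; simp [Fin.ext_iff]
    · have h0' : ¬((A t : ℕ) = 0) := fun h => h0 (Fin.ext h)
      have h1' : ¬((A t : ℕ) = 1) := fun h => h1 (Fin.ext h)
      rw [if_neg h0', if_neg h1', if_neg h0, if_neg h1]
      norm_num

lemma boostWeight_le {k p : ℕ} (A : Fin p → Fin (k+2)) : boostWeight A ≤ (p : ℤ) := by
  rw [boostWeight_eq_sum]
  calc ∑ t, wt (A t) ≤ ∑ _t : Fin p, (1 : ℤ) :=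
        Finset.sum_le_sum fun t _ => wt_le_one (A t)
    _ = p := by simp

/-- Triangularity of the change of frame matrix: coefficients can only involve
indices of boost weight at least as large. -/
lemma change_triangular {k : ℕ} {e e' : Fin (k+2) → (Fin (k+2) → ℝ)}
    (he : IsNullFrame e) (he' : IsNullFrame e') (c : ℝ) (hc : c ≠ 0)
    (hprop : e' 0 = c • e 0) (a b : Fin (k+2))
    (hM : (frameBasis he).repr (e' a) b ≠ 0) : wt a ≤ wt b := by
  have he0 : e 0 = c⁻¹ • e' 0 := by
    rw [hprop, smul_smul, inv_mul_cancel₀ hc, one_smul]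
  by_cases ha0 : a = 0
  · -- row 0: only the entry at b = 0 can be nonzero
    subst ha0
    have hb0 : b = 0 := by
      by_contra hb
      apply hM
      rw [repr_eq_mip he, hprop, mip_smul_left, gram he]
      rw [if_neg, mul_zero]
      intro h
      exact hb (by simpa using h.symm)
    subst hb0; exact le_refl _
  · by_cases ha1 : a = 1
    · -- wt a = -1 is minimal
      subst ha1
      simpa [wt] using neg_one_le_wt b
    · -- wt a = 0 : entry at b = 1 vanishes
      have hb1 : b ≠ 1 := by
        intro hb
        apply hM
        subst hb
        rw [repr_eq_mip he, Equiv.swap_apply_right, he0, mip_comm,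
          mip_smul_left, gram he']
        rw [if_neg, mul_zero]
        intro h
        exact ha1 (by simpa using (congrArg (Equiv.swap (0 : Fin (k+2)) 1) h).symm)
      unfold wt
      rw [if_neg ha0, if_neg ha1, if_neg hb1]
      split_ifs <;> norm_num

/-- Key lemma: a nonzero component in the primed frame forces a nonzero component
of at least the same boost weight in the unprimed frame. -/
lemma key_lemma {k p : ℕ}
    (T : MultilinearMap ℝ (fun _ : Fin p => (Fin (k+2) → ℝ)) ℝ)
    {e e' : Fin (k+2) → (Fin (k+2) → ℝ)}
    (he : IsNullFrame e) (he' : IsNullFrame e') (c : ℝ) (hc : c ≠ 0)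
    (hprop : e' 0 = c • e 0) (A : Fin p → Fin (k+2))
    (hA : T (fun t => e' (A t)) ≠ 0) :
    ∃ B : Fin p → Fin (k+2), T (fun t => e (B t)) ≠ 0 ∧ boostWeight A ≤ boostWeight B := by
  set M : Fin (k+2) → Fin (k+2) → ℝ := fun a b => (frameBasis he).repr (e' a) b with hM
  have hexp : ∀ a, e' a = ∑ b, M a b • e b := by
    intro a
    conv_lhs => rw [← Module.Basis.sum_repr (frameBasis he) (e' a)]
    simp only [frameBasis_apply he, hM]
  have hsum : T (fun t => e' (A t))
      = ∑ r : Fin p → Fin (k+2), (∏ t, M (A t) (r t)) • T (fun t => e (r t)) := by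
    have h1 : (fun t => e' (A t)) = fun t => ∑ b, M (A t) b • e b :=
      funext fun t => hexp (A t)
    rw [h1, T.map_sum (fun t b => M (A t) b • e b)]
    exact Finset.sum_congr rfl fun r _ => T.map_smul_univ _ _
  rw [hsum] at hA
  obtain ⟨r, -, hr⟩ := Finset.exists_ne_zero_of_sum_ne_zero hA
  rw [smul_ne_zero_iff] at hr
  obtain ⟨hprod, hT⟩ := hr
  refine ⟨r, hT, ?_⟩
  rw [boostWeight_eq_sum, boostWeight_eq_sum]
  refine Finset.sum_le_sum fun t _ => ?_
  exact change_triangular he he' c hc hprop (A t) (r t)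
    (Finset.prod_ne_zero_iff.mp hprod t (Finset.mem_univ t))

/-- if two null frames have proportional first vectors `ℓ`,
then a tensor `T` has the same boost order relative to both frames. -/
theorem boost_order_well_defined {k p : ℕ}
    (T : MultilinearMap ℝ (fun _ : Fin p => (Fin (k+2) → ℝ)) ℝ)
    (e e' : Fin (k+2) → (Fin (k+2) → ℝ))
    (he : IsNullFrame e) (he' : IsNullFrame e')
    (c : ℝ) (hc : c ≠ 0) (hprop : e' 0 = c • e 0) :
    sSup {b : ℤ | ∃ A : Fin p → Fin (k+2),
        T (fun t => e (A t)) ≠ 0 ∧ boostWeight A = b}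
      = sSup {b : ℤ | ∃ A : Fin p → Fin (k+2),
        T (fun t => e' (A t)) ≠ 0 ∧ boostWeight A = b} := by
  set S : Set ℤ := {b : ℤ | ∃ A : Fin p → Fin (k+2),
      T (fun t => e (A t)) ≠ 0 ∧ boostWeight A = b} with hS
  set S' : Set ℤ := {b : ℤ | ∃ A : Fin p → Fin (k+2),
      T (fun t => e' (A t)) ≠ 0 ∧ boostWeight A = b} with hS'
  have hprop' : e 0 = c⁻¹ • e' 0 := by
    rw [hprop, smul_smul, inv_mul_cancel₀ hc, one_smul]
  have hd1 : ∀ b ∈ S', ∃ b' ∈ S, b ≤ b' := by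
    rintro b ⟨A, hA, rfl⟩
    obtain ⟨B, hB, hle⟩ := key_lemma T he he' c hc hprop A hA
    exact ⟨boostWeight B, ⟨B, hB, rfl⟩, hle⟩
  have hd2 : ∀ b ∈ S, ∃ b' ∈ S', b ≤ b' := by
    rintro b ⟨A, hA, rfl⟩
    obtain ⟨B, hB, hle⟩ := key_lemma T he' he c⁻¹ (inv_ne_zero hc) hprop' A hA
    exact ⟨boostWeight B, ⟨B, hB, rfl⟩, hle⟩
  have bddS : BddAbove S := ⟨(p : ℤ), by rintro b ⟨A, -, rfl⟩; exact boostWeight_le A⟩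
  have bddS' : BddAbove S' := ⟨(p : ℤ), by rintro b ⟨A, -, rfl⟩; exact boostWeight_le A⟩
  rcases Set.eq_empty_or_nonempty S with hemp | hne
  · have hemp' : S' = ∅ := by
      rw [Set.eq_empty_iff_forall_notMem]
      intro b hb
      obtain ⟨b', hb', -⟩ := hd1 b hb
      rw [hemp] at hb'
      exact hb'
    rw [hemp, hemp']
  · have hne' : S'.Nonempty := by
      obtain ⟨b, hb⟩ := hne
      obtain ⟨b', hb', -⟩ := hd2 b hb
      exact ⟨b', hb'⟩
    apply le_antisymm
    · refine csSup_le hne fun b hb => ?_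
      obtain ⟨b', hb', hle⟩ := hd2 b hb
      exact hle.trans (le_csSup bddS' hb')
    · refine csSup_le hne' fun b hb => ?_
      obtain ⟨b', hb', hle⟩ := hd1 b hb
      exact hle.trans (le_csSup bddS hb')
end

section
/- Let R be a symmetric linear endomorphism of n-dimensional Minkowski space (i.e., R^a_b with R_{ab} = R_{ba} after lowering an index with the Lorentzian metric g). Then R has a complex eigenvalue of algebraic multiplicity at least 2 if and only if R possesses a (possibly complex) null eigenvector, i.e., a nonzero vector v in the complexification with g(v,v) = 0 and Rv = λv for some λ ∈ ℂ. -/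
open scoped Matrix

/-- The complexified Minkowski metric matrix. -/
noncomputable def minkMetricC (n : ℕ) : Matrix (Fin n) (Fin n) ℂ :=
  (minkMetric n).map Complex.ofReal

/-!
Write `f = φ - μ` for a `B`-self-adjoint `φ`. If the eigenvalue `μ` is defective, some `x` has
`f (f x) = 0 ≠ f x`, and `v = f x` is an isotropic eigenvector: `B v v = B x (f (f x)) = 0`.
Otherwise the generalized eigenspace is the eigenspace, of dimension at least 2, and over an
algebraically closed field every bilinear form on such a space has an isotropic vector.
Conversely, an eigenvector `v` for `μ` is `B`-orthogonal to the generalized eigenspaces of all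
other eigenvalues; if `μ` is simple, `v` spans its own generalized eigenspace, so an isotropic `v`
is orthogonal to all generalized eigenspaces, which span the space, contradicting nondegeneracy.
-/

open Polynomial Module

theorem LinearMap.BilinForm.exists_ne_zero_apply_self_eq_zero {K V : Type*} [Field K]
    [IsAlgClosed K] [AddCommGroup V] [Module K V] (B : LinearMap.BilinForm K V)
    (hV : 1 < finrank K V) : ∃ v : V, v ≠ 0 ∧ B v v = 0 := by
  have : Nontrivial V := Module.nontrivial_of_finrank_pos (R := K) (by omega)
  obtain ⟨u, hu0⟩ := exists_ne (0 : V)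
  by_cases hu : B u u = 0
  · exact ⟨u, hu0, hu⟩
  obtain ⟨w, huw⟩ := exists_linearIndependent_pair_of_one_lt_finrank hV hu0
  -- `B (t • u + w) (t • u + w)` is this quadratic polynomial evaluated at `t`.
  obtain ⟨t, ht⟩ := IsAlgClosed.exists_root
    (C (B u u) * X ^ 2 + C (B u w + B w u) * X + C (B w w)) (by rw [degree_quadratic hu]; decide)
  refine ⟨t • u + w,
    fun h => one_ne_zero (LinearIndependent.pair_iff.1 huw t 1 (by simpa using h)).2, ?_⟩
  simp only [IsRoot, eval_add, eval_mul, eval_C, eval_pow, eval_X] at ht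
  simp only [map_add, map_smul, LinearMap.add_apply, LinearMap.smul_apply, smul_eq_mul]
  linear_combination ht

theorem Module.End.maxGenEigenspace_le_eigenspace {R M : Type*} [CommRing R] [AddCommGroup M]
    [Module R M] {f : Module.End R M} {μ : R}
    (h : ∀ x, (f - μ • 1) ((f - μ • 1) x) = 0 → (f - μ • 1) x = 0) :
    f.maxGenEigenspace μ ≤ f.eigenspace μ := by
  suffices ∀ (k : ℕ) x, ((f - μ • 1) ^ k : Module.End R M) x = 0 → (f - μ • 1) x = 0 by
    intro x hx
    obtain ⟨k, hk⟩ := (mem_maxGenEigenspace f μ x).1 hx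
    simpa [mem_eigenspace_iff, sub_eq_zero] using this k x hk
  intro k
  induction k with
  | zero => intro x hx; simp_all
  | succ k ih => exact fun x hx => h x (ih _ (by rwa [← Module.End.mul_apply, ← pow_succ]))

namespace LinearMap.IsAdjointPair

variable {K V : Type*} [Field K] [AddCommGroup V] [Module K V]
variable {B : LinearMap.BilinForm K V} {φ : Module.End K V}

theorem sub_smul_one (hφ : IsAdjointPair B B φ φ) (ν : K) :
    IsAdjointPair B B ⇑(φ - ν • 1 : Module.End K V) ⇑(φ - ν • 1 : Module.End K V) :=
  fun x y => by
    simp only [LinearMap.sub_apply, LinearMap.smul_apply, Module.End.one_apply, map_sub, map_smul,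
      LinearMap.smul_apply, hφ x y]

theorem apply_pow_sub_smul_one_apply (hφ : IsAdjointPair B B φ φ) {v : V} {μ : K}
    (hv : φ v = μ • v) (ν : K) (k : ℕ) (x : V) :
    B v (((φ - ν • 1) ^ k) x) = (μ - ν) ^ k * B v x := by
  have hv' : (φ - ν • 1) v = (μ - ν) • v := by simp [hv, sub_smul]
  induction k with
  | zero => simp
  | succ k ih =>
    rw [pow_succ', Module.End.mul_apply, ← sub_smul_one hφ ν v, hv', map_smul,
      LinearMap.smul_apply, ih, smul_eq_mul, pow_succ', mul_assoc]

theorem apply_eq_zero_of_mem_maxGenEigenspace (hφ : IsAdjointPair B B φ φ) {v x : V} {μ ν : K}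
    (hv : φ v = μ • v) (hνμ : ν ≠ μ) (hx : x ∈ φ.maxGenEigenspace ν) : B v x = 0 := by
  obtain ⟨k, hk⟩ := (Module.End.mem_maxGenEigenspace φ ν x).1 hx
  have := apply_pow_sub_smul_one_apply hφ hv ν k x
  rw [hk, map_zero, eq_comm] at this
  exact (mul_eq_zero.1 this).resolve_left (pow_ne_zero _ (sub_ne_zero.2 hνμ.symm))

variable [IsAlgClosed K] [FiniteDimensional K V]

theorem exists_isotropic_eigenvector_of_two_le_rootMultiplicity (hφ : IsAdjointPair B B φ φ)
    {μ : K} (h : 2 ≤ φ.charpoly.rootMultiplicity μ) :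
    ∃ v, v ≠ 0 ∧ B v v = 0 ∧ φ v = μ • v := by
  set f : Module.End K V := φ - μ • 1
  by_cases hchain : ∃ x, f (f x) = 0 ∧ f x ≠ 0
  · obtain ⟨x, hffx, hfx⟩ := hchain
    refine ⟨f x, hfx, by rw [sub_smul_one hφ μ, hffx, map_zero], ?_⟩
    simpa [f, sub_eq_zero] using hffx
  push Not at hchain
  have hdim : 1 < finrank K (φ.eigenspace μ) :=
    calc 1 < φ.charpoly.rootMultiplicity μ := h
      _ = finrank K (φ.maxGenEigenspace μ) := (LinearMap.finrank_maxGenEigenspace_eq φ μ).symm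
      _ ≤ _ := Submodule.finrank_mono (Module.End.maxGenEigenspace_le_eigenspace hchain)
  obtain ⟨⟨v, hv⟩, hv0, hvv⟩ := (B.restrict _).exists_ne_zero_apply_self_eq_zero hdim
  exact ⟨v, by simpa using hv0, hvv, Module.End.mem_eigenspace_iff.1 hv⟩

theorem two_le_rootMultiplicity_of_isotropic_eigenvector (hB : B.SeparatingLeft)
    (hφ : IsAdjointPair B B φ φ) {μ : K} {v : V} (hv0 : v ≠ 0) (hvv : B v v = 0)
    (hv : φ v = μ • v) : 2 ≤ φ.charpoly.rootMultiplicity μ := by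
  by_contra! hlt
  have hvE : v ∈ φ.maxGenEigenspace μ :=
    Module.End.eigenspace_le_maxGenEigenspace (Module.End.mem_eigenspace_iff.2 hv)
  have hspan : φ.maxGenEigenspace μ = K ∙ v :=
    (Submodule.eq_of_le_of_finrank_le ((Submodule.span_singleton_le_iff_mem _ _).2 hvE)
      (by rw [finrank_span_singleton hv0, LinearMap.finrank_maxGenEigenspace_eq]; omega)).symm
  have horth : ∀ ν, φ.maxGenEigenspace ν ≤ LinearMap.ker (B v) := by
    intro ν
    rcases eq_or_ne ν μ with rfl | hνμ
    · rwa [hspan, Submodule.span_singleton_le_iff_mem]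
    · exact fun x hx => apply_eq_zero_of_mem_maxGenEigenspace hφ hv hνμ hx
  refine hv0 (hB v fun y => ?_)
  exact iSup_le horth (φ.iSup_maxGenEigenspace_eq_top ▸ Submodule.mem_top)

theorem two_le_rootMultiplicity_charpoly_iff (hB : B.SeparatingLeft) (hφ : IsAdjointPair B B φ φ)
    (μ : K) : 2 ≤ φ.charpoly.rootMultiplicity μ ↔ ∃ v, v ≠ 0 ∧ B v v = 0 ∧ φ v = μ • v :=
  ⟨exists_isotropic_eigenvector_of_two_le_rootMultiplicity hφ,
    fun ⟨_, hv0, hvv, hv⟩ => two_le_rootMultiplicity_of_isotropic_eigenvector hB hφ hv0 hvv hv⟩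

end LinearMap.IsAdjointPair

theorem minkMetric_transpose (n : ℕ) : (minkMetric n)ᵀ = minkMetric n :=
  Matrix.diagonal_transpose _

theorem det_minkMetricC_ne_zero (n : ℕ) : (minkMetricC n).det ≠ 0 := by
  change (Complex.ofRealHom.mapMatrix (minkMetric n)).det ≠ 0
  rw [← RingHom.map_det, minkMetric, Matrix.det_diagonal, Complex.ofRealHom_eq_coe,
    Complex.ofReal_ne_zero]
  exact Finset.prod_ne_zero_iff.2 fun i _ => by split_ifs <;> norm_num

theorem isAdjointPair_minkMetricC {n : ℕ} {R : Matrix (Fin n) (Fin n) ℝ}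
    (hR : (minkMetric n * R)ᵀ = minkMetric n * R) :
    (minkMetricC n).IsAdjointPair (minkMetricC n) (R.map Complex.ofReal)
      (R.map Complex.ofReal) := by
  have hR' : Rᵀ * minkMetric n = minkMetric n * R := by
    rwa [Matrix.transpose_mul, minkMetric_transpose] at hR
  have := congrArg (Matrix.map · Complex.ofRealHom) hR'
  simp only [Matrix.map_mul] at this
  exact this

/-- a g-symmetric endomorphism `R` of Minkowski space has a complex
eigenvalue of algebraic multiplicity at least 2 if and only if its
complexification possesses a null eigenvector. -/
theorem multiple_eigenvalue_iff_null_eigenvector {n : ℕ}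
    (R : Matrix (Fin n) (Fin n) ℝ)
    (hsym : (minkMetric n * R)ᵀ = minkMetric n * R) :
    (∃ lam : ℂ,
        2 ≤ Polynomial.rootMultiplicity lam
              (Matrix.charpoly (R.map Complex.ofReal)))
    ↔ (∃ (lam : ℂ) (v : Fin n → ℂ), v ≠ 0 ∧
        v ⬝ᵥ (minkMetricC n).mulVec v = 0 ∧
        (R.map Complex.ofReal).mulVec v = lam • v) := by
  have hB : (minkMetricC n).toBilin'.SeparatingLeft :=
    ((Matrix.nondegenerate_of_det_ne_zero (det_minkMetricC_ne_zero n)).separatingLeft).toBilin'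
  have hφ := (isAdjointPair_toLinearMap₂' _ _ _ _).2 (isAdjointPair_minkMetricC hsym)
  simp only [← Matrix.charpoly_toLin',
    LinearMap.IsAdjointPair.two_le_rootMultiplicity_charpoly_iff hB hφ, Matrix.toBilin'_apply',
    Matrix.toLin'_apply]
end

section
/- Let R be a g-symmetric endomorphism of complexified Minkowski space with eigenvectors u, v for the same eigenvalue λ (Ru = λu, Rv = λv, u, v linearly independent), neither of which is null. Then there exists α ∈ ℂ such that u + αv is a nonzero null eigenvector of R. -/
open scoped Matrix

/-- The complex-bilinear extension of the Minkowski inner product to ℂ^n. -/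
noncomputable def mipC {n : ℕ} (u v : Fin n → ℂ) : ℂ :=
  u ⬝ᵥ (minkMetricC n).mulVec v

/-- if `u, v` are linearly independent eigenvectors of a
g-symmetric `R` for the same eigenvalue `λ`, and neither is null, then some
combination `u + αv` is a nonzero null eigenvector. -/
theorem two_eigenvectors_give_null_eigenvector {n : ℕ}
    (R : Matrix (Fin n) (Fin n) ℂ)
    (hsym : ∀ u w : Fin n → ℂ, mipC (R.mulVec u) w = mipC u (R.mulVec w))
    (u v : Fin n → ℂ) (lam : ℂ)
    (hu : R.mulVec u = lam • u) (hv : R.mulVec v = lam • v)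
    (hindep : LinearIndependent ℂ ![u, v])
    (hunn : mipC u u ≠ 0) (hvnn : mipC v v ≠ 0) :
    ∃ α : ℂ, u + α • v ≠ 0 ∧ mipC (u + α • v) (u + α • v) = 0 ∧
      R.mulVec (u + α • v) = lam • (u + α • v) := by
  -- Expand the quadratic in `α`.
  set a := mipC v v with ha
  set b : ℂ := mipC u v + mipC v u with hb
  set c := mipC u u with hc
  obtain ⟨s, hs⟩ := IsAlgClosed.exists_pow_nat_eq (b ^ 2 - 4 * a * c) (n := 2) (by norm_num)
  refine ⟨(-b + s) / (2 * a), ?_, ?_, ?_⟩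
  · intro h
    rw [linearIndependent_fin2] at hindep
    have h0 : u = (-((-b + s) / (2 * a))) • v := by
      have := congrArg (fun w => w - ((-b + s) / (2 * a)) • v) h
      simp at this
      funext i
      have := congrFun h i
      simp at this ⊢
      linear_combination this
    exact hindep.2 (-((-b + s) / (2 * a))) h0.symm
  · have hexp : mipC (u + ((-b + s) / (2 * a)) • v) (u + ((-b + s) / (2 * a)) • v)
        = c + ((-b + s) / (2 * a)) * b + ((-b + s) / (2 * a)) ^ 2 * a := by
      simp only [mipC, Matrix.mulVec_add, Matrix.mulVec_smul, add_dotProduct,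
        smul_dotProduct, dotProduct_add, dotProduct_smul, smul_eq_mul]
      simp only [mipC] at ha hb hc
      rw [ha, hb, hc]; ring
    have h4a : (4 : ℂ) * a ≠ 0 := by
      exact mul_ne_zero (by norm_num) hvnn
    have : c + ((-b + s) / (2 * a)) * b + ((-b + s) / (2 * a)) ^ 2 * a
        = (s ^ 2 - (b ^ 2 - 4 * a * c)) / (4 * a) := by
      field_simp
      ring
    rw [hexp, this, hs, sub_self, zero_div]
  · simp [Matrix.mulVec_add, Matrix.mulVec_smul, hu, hv, smul_smul, smul_add, mul_comm]
end

section
/- Let C be a Weyl-like tensor on n-dimensional Minkowski space and k a null vector, completed to a null frame ℓ = k, n, m_2,...,m_{n-1}. Then the PND equation k^b k_{[e} C_{a]bc[d} k_{f]} k^c = 0 holds if and only if C_{0i0j} = 0 for all i, j = 2,...,n−1; that is, k satisfies the PND equation if and only if all boost weight 2 components of C vanish in the frame with ℓ = k. -/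
open scoped Matrix BigOperators

/-- The standard basis vector `e_a` of ℝ^n. -/
noncomputable def std {n : ℕ} (a : Fin n) : Fin n → ℝ := Pi.single a 1

section aux
variable {kk n : ℕ}

lemma mip_add (u y z : Fin n → ℝ) : mip u (y + z) = mip u y + mip u z := by
  simp [mip, Matrix.mulVec_add, dotProduct_add]

lemma mip_smul (u : Fin n → ℝ) (r : ℝ) (y : Fin n → ℝ) : mip u (r • y) = r * mip u y := by
  simp [mip, Matrix.mulVec_smul, dotProduct_smul, smul_eq_mul]

lemma mip_symm (u v : Fin n → ℝ) : mip u v = mip v u := by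
  simp [mip, minkMetric, Matrix.mulVec_diagonal, dotProduct]
  exact Finset.sum_congr rfl fun i _ => by ring

lemma mip_std (u : Fin n → ℝ) (e : Fin n) :
    mip u (std e) = (if (e : ℕ) = 0 then (-1:ℝ) else 1) * u e := by
  simp [mip, std, minkMetric, Matrix.mulVec_diagonal, dotProduct, Pi.single_apply]

lemma eq_sum_std (x : Fin n → ℝ) : x = ∑ a, x a • std a := by
  ext j
  simp [std, Pi.single_apply]

lemma expandF {N : ℕ} (φ : (Fin n → ℝ) → ℝ)
    (hadd : ∀ y z, φ (y + z) = φ y + φ z)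
    (hsmul : ∀ (r : ℝ) y, φ (r • y) = r * φ y)
    (g : Fin N → ℝ) (F : Fin N → (Fin n → ℝ)) :
    φ (∑ t, g t • F t) = ∑ t, g t * φ (F t) := by
  let L : (Fin n → ℝ) →ₗ[ℝ] ℝ :=
    { toFun := φ, map_add' := hadd, map_smul' := fun r y => by simp [hsmul r y] }
  show L (∑ t, g t • F t) = ∑ t, g t * L (F t)
  rw [map_sum]
  exact Finset.sum_congr rfl fun t _ => by rw [map_smul]; simp

lemma expandStd (φ : (Fin n → ℝ) → ℝ)
    (hadd : ∀ y z, φ (y + z) = φ y + φ z)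
    (hsmul : ∀ (r : ℝ) y, φ (r • y) = r * φ y)
    (u : Fin n → ℝ) : φ u = ∑ a, u a * φ (std a) := by
  conv_lhs => rw [eq_sum_std u]
  exact expandF φ hadd hsmul u std

lemma update0 (a b c d y : Fin n → ℝ) :
    Function.update ![a, b, c, d] 0 y = ![y, b, c, d] := by
  ext i x; fin_cases i <;> simp

lemma update3 (a b c d y : Fin n → ℝ) :
    Function.update ![a, b, c, d] 3 y = ![a, b, c, y] := by
  ext i x; fin_cases i <;> simp

variable (C : MultilinearMap ℝ (fun _ : Fin 4 => (Fin n → ℝ)) ℝ) (ℓ : Fin n → ℝ)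

/-- contraction c u v = C(u,ℓ,ℓ,v) -/
noncomputable def cC (u v : Fin n → ℝ) : ℝ := C ![u, ℓ, ℓ, v]

lemma cC_add0 (y z v : Fin n → ℝ) : cC C ℓ (y + z) v = cC C ℓ y v + cC C ℓ z v := by
  have h := C.map_update_add ![y, ℓ, ℓ, v] 0 y z
  rwa [update0, update0, update0] at h

lemma cC_smul0 (r : ℝ) (y v : Fin n → ℝ) : cC C ℓ (r • y) v = r * cC C ℓ y v := by
  have h := C.map_update_smul ![y, ℓ, ℓ, v] 0 r y
  rw [update0, update0] at h
  simpa [cC] using h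

lemma cC_add3 (u y z : Fin n → ℝ) : cC C ℓ u (y + z) = cC C ℓ u y + cC C ℓ u z := by
  have h := C.map_update_add ![u, ℓ, ℓ, y] 3 y z
  rwa [update3, update3, update3] at h

lemma cC_smul3 (r : ℝ) (u y : Fin n → ℝ) : cC C ℓ u (r • y) = r * cC C ℓ u y := by
  have h := C.map_update_smul ![u, ℓ, ℓ, y] 3 r y
  rw [update3, update3] at h
  simpa [cC] using h

/-- the PND quadrilinear expression -/
noncomputable def EE (u w v x : Fin n → ℝ) : ℝ :=
  mip ℓ w * mip ℓ x * cC C ℓ u v - mip ℓ u * mip ℓ x * cC C ℓ w v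
    - mip ℓ w * mip ℓ v * cC C ℓ u x + mip ℓ u * mip ℓ v * cC C ℓ w x

lemma EE_add1 (y z w v x : Fin n → ℝ) :
    EE C ℓ (y + z) w v x = EE C ℓ y w v x + EE C ℓ z w v x := by
  simp only [EE, cC_add0, mip_add]; ring

lemma EE_smul1 (r : ℝ) (y w v x : Fin n → ℝ) :
    EE C ℓ (r • y) w v x = r * EE C ℓ y w v x := by
  simp only [EE, cC_smul0, mip_smul]; ring

lemma EE_add2 (u y z v x : Fin n → ℝ) :
    EE C ℓ u (y + z) v x = EE C ℓ u y v x + EE C ℓ u z v x := by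
  simp only [EE, cC_add0, mip_add]; ring

lemma EE_smul2 (r : ℝ) (u y v x : Fin n → ℝ) :
    EE C ℓ u (r • y) v x = r * EE C ℓ u y v x := by
  simp only [EE, cC_smul0, mip_smul]; ring

lemma EE_add3 (u w y z x : Fin n → ℝ) :
    EE C ℓ u w (y + z) x = EE C ℓ u w y x + EE C ℓ u w z x := by
  simp only [EE, cC_add3, mip_add]; ring

lemma EE_smul3 (r : ℝ) (u w y x : Fin n → ℝ) :
    EE C ℓ u w (r • y) x = r * EE C ℓ u w y x := by
  simp only [EE, cC_add3, cC_smul3, mip_smul]; ring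

lemma EE_add4 (u w v y z : Fin n → ℝ) :
    EE C ℓ u w v (y + z) = EE C ℓ u w v y + EE C ℓ u w v z := by
  simp only [EE, cC_add3, mip_add]; ring

lemma EE_smul4 (r : ℝ) (u w v y : Fin n → ℝ) :
    EE C ℓ u w v (r • y) = r * EE C ℓ u w v y := by
  simp only [EE, cC_smul3, mip_smul]; ring


lemma EE_zero_comb {N : ℕ} (F : Fin N → (Fin n → ℝ))
    (hEF : ∀ t1 t2 t3 t4, EE C ℓ (F t1) (F t2) (F t3) (F t4) = 0)
    (g1 g2 g3 g4 : Fin N → ℝ) :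
    EE C ℓ (∑ t, g1 t • F t) (∑ t, g2 t • F t) (∑ t, g3 t • F t) (∑ t, g4 t • F t) = 0 := by
  rw [expandF (fun u => EE C ℓ u _ _ _) (fun y z => EE_add1 C ℓ y z _ _ _)
    (fun r y => EE_smul1 C ℓ r y _ _ _) g1 F]
  refine Finset.sum_eq_zero fun t1 _ => mul_eq_zero_of_right _ ?_
  rw [expandF (fun w => EE C ℓ (F t1) w _ _) (fun y z => EE_add2 C ℓ (F t1) y z _ _)
    (fun r y => EE_smul2 C ℓ r (F t1) y _ _) g2 F]
  refine Finset.sum_eq_zero fun t2 _ => mul_eq_zero_of_right _ ?_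
  rw [expandF (fun v => EE C ℓ (F t1) (F t2) v _) (fun y z => EE_add3 C ℓ (F t1) (F t2) y z _)
    (fun r y => EE_smul3 C ℓ r (F t1) (F t2) y _) g3 F]
  refine Finset.sum_eq_zero fun t3 _ => mul_eq_zero_of_right _ ?_
  rw [expandF (fun x => EE C ℓ (F t1) (F t2) (F t3) x)
    (fun y z => EE_add4 C ℓ (F t1) (F t2) (F t3) y z)
    (fun r y => EE_smul4 C ℓ r (F t1) (F t2) (F t3) y) g4 F]
  exact Finset.sum_eq_zero fun t4 _ => mul_eq_zero_of_right _ (hEF t1 t2 t3 t4)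

lemma fin_cases3 (t : Fin (kk+2)) :
    t = 0 ∨ t = 1 ∨ ∃ i : Fin kk, t = i.succ.succ := by
  refine Fin.cases (Or.inl rfl) (fun s => ?_) t
  exact Fin.cases (Or.inr (Or.inl Fin.succ_zero_eq_one)) (fun i => Or.inr (Or.inr ⟨i, rfl⟩)) s

lemma succ_succ_ne_one (i : Fin kk) : (i.succ.succ : Fin (kk+2)) ≠ 1 := by
  intro h
  rw [← Fin.succ_zero_eq_one] at h
  exact (Fin.succ_ne_zero i) (Fin.succ_injective _ h)

end aux

/-- for a Weyl-like tensor `C` and a null vector `k = ℓ` completed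
to a null frame, the PND equation `k^b k_[e C_a]bc[d k_f] k^c = 0` holds iff all
boost weight 2 components `C₀ᵢ₀ⱼ` vanish. -/
theorem pnd_equation_iff_aligned {kk : ℕ}
    (C : MultilinearMap ℝ (fun _ : Fin 4 => (Fin (kk+2) → ℝ)) ℝ)
    -- Weyl-like symmetries
    (hA : ∀ a b c d, C ![a, b, c, d] = - C ![b, a, c, d])
    (hP : ∀ a b c d, C ![a, b, c, d] = C ![c, d, a, b])
    (hB : ∀ a b c d, C ![a, b, c, d] + C ![a, c, d, b] + C ![a, d, b, c] = 0)
    (hT : ∀ a c, ∑ b : Fin (kk+2),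
      (if (b : ℕ) = 0 then (-1 : ℝ) else 1) * C ![a, std b, c, std b] = 0)
    -- null frame with ℓ = k
    (ℓ nn : Fin (kk+2) → ℝ) (m : Fin kk → (Fin (kk+2) → ℝ))
    (hln : mip ℓ nn = 1) (hll : mip ℓ ℓ = 0) (hnn : mip nn nn = 0)
    (hlm : ∀ i, mip ℓ (m i) = 0) (hnm : ∀ i, mip nn (m i) = 0)
    (hmm : ∀ i j, mip (m i) (m j) = if i = j then 1 else 0)
    -- the lowered vector k_a and the contraction D_ad = C_abcd k^b k^c
    (klow : Fin (kk+2) → ℝ) (hklow : klow = (minkMetric (kk+2)).mulVec ℓ)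
    (D : Fin (kk+2) → Fin (kk+2) → ℝ)
    (hD : ∀ a d, D a d = C ![std a, ℓ, ℓ, std d]) :
    (∀ a e d f : Fin (kk+2),
        klow e * D a d * klow f - klow a * D e d * klow f
          - klow e * D a f * klow d + klow a * D e f * klow d = 0)
    ↔ (∀ i j, C ![ℓ, m i, ℓ, m j] = 0) := by
  have hps : ∀ e : Fin (kk+2), mip ℓ (std e) = klow e := by
    intro e
    rw [mip_std, hklow]
    simp [minkMetric, Matrix.mulVec_diagonal]
  have hcD : ∀ a d, cC C ℓ (std a) (std d) = D a d := fun a d => (hD a d).symm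
  have hEstd : ∀ a e d f : Fin (kk+2),
      EE C ℓ (std a) (std e) (std d) (std f)
        = klow e * D a d * klow f - klow a * D e d * klow f
          - klow e * D a f * klow d + klow a * D e f * klow d := by
    intro a e d f
    simp only [EE, hps, hcD]; ring
  have hcl : ∀ v, cC C ℓ ℓ v = 0 := by
    intro v; have := hA ℓ ℓ ℓ v; simp only [cC]; linarith
  have hcr : ∀ u, cC C ℓ u ℓ = 0 := by
    intro u
    have h1 : C ![u, ℓ, ℓ, ℓ] = C ![ℓ, ℓ, u, ℓ] := hP u ℓ ℓ ℓ
    have h2 := hA ℓ ℓ u ℓ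
    simp only [cC]; linarith
  constructor
  · -- PND ⇒ components vanish
    intro h i j
    have hE0 : ∀ t1 t2 t3 t4 : Fin (kk+2),
        EE C ℓ (std t1) (std t2) (std t3) (std t4) = 0 := by
      intro t1 t2 t3 t4; rw [hEstd]; exact h t1 t2 t3 t4
    have hmij : EE C ℓ (m i) nn (m j) nn = 0 := by
      conv_lhs => rw [eq_sum_std (m i), eq_sum_std nn, eq_sum_std (m j)]
      exact EE_zero_comb C ℓ std hE0 (m i) nn (m j) nn
    have hc0 : cC C ℓ (m i) (m j) = 0 := by
      simp only [EE, hln, hlm i, hlm j] at hmij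
      linarith
    have hAij := hA ℓ (m i) ℓ (m j)
    simp only [cC] at hc0
    rw [hAij, hc0, neg_zero]
  · -- components vanish ⇒ PND
    intro hz a e d f
    set F : Fin (kk+2) → (Fin (kk+2) → ℝ) := Fin.cons ℓ (Fin.cons nn m) with hF
    have hF0 : F 0 = ℓ := rfl
    have hF1 : F 1 = nn := by
      have h1 : (1 : Fin (kk+2)) = Fin.succ 0 := rfl
      rw [hF, h1, Fin.cons_succ, Fin.cons_zero]
    have hFm : ∀ i : Fin kk, F i.succ.succ = m i := by
      intro i; rw [hF, Fin.cons_succ, Fin.cons_succ]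
    have h01 : (0 : Fin (kk+2)) ≠ 1 := by
      intro h; exact absurd (congrArg Fin.val h) (by simp)
    have hFp : ∀ t, mip ℓ (F t) = if t = 1 then 1 else 0 := by
      intro t
      rcases fin_cases3 t with rfl | rfl | ⟨i, rfl⟩
      · rw [hF0, hll]; simp [h01]
      · rw [hF1, hln]; simp
      · rw [hFm, hlm]; simp [succ_succ_ne_one i]
    have hFc : ∀ s t, s ≠ 1 → t ≠ 1 → cC C ℓ (F s) (F t) = 0 := by
      intro s t hs ht
      rcases fin_cases3 s with rfl | rfl | ⟨i, rfl⟩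
      · rw [hF0]; exact hcl _
      · exact absurd rfl hs
      · rcases fin_cases3 t with rfl | rfl | ⟨j, rfl⟩
        · rw [hFm, hF0]; exact hcr _
        · exact absurd rfl ht
        · rw [hFm, hFm]
          have h1 := hA ℓ (m i) ℓ (m j)
          have h2 := hz i j
          simp only [cC]; linarith
    have hEF : ∀ t1 t2 t3 t4, EE C ℓ (F t1) (F t2) (F t3) (F t4) = 0 := by
      intro t1 t2 t3 t4
      simp only [EE, hFp]
      by_cases h1 : t1 = 1 <;> by_cases h2 : t2 = 1 <;> by_cases h3 : t3 = 1 <;>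
        by_cases h4 : t4 = 1 <;>
        simp [h1, h2, h3, h4, hFc]
    -- F is a basis
    have hdual : ∀ t : Fin (kk+2), ∃ s, ∀ t', mip (F s) (F t') = if t' = t then 1 else 0 := by
      intro t
      rcases fin_cases3 t with rfl | rfl | ⟨i, rfl⟩
      · refine ⟨1, fun t' => ?_⟩
        rcases fin_cases3 t' with rfl | rfl | ⟨j, rfl⟩
        · rw [hF1, hF0, mip_symm, hln]; simp
        · rw [hF1, hnn]; simp [h01.symm]
        · rw [hF1, hFm, hnm]
          simp [(Fin.succ_ne_zero _ : (Fin.succ (Fin.succ j)) ≠ 0)]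
      · refine ⟨0, fun t' => ?_⟩
        rcases fin_cases3 t' with rfl | rfl | ⟨j, rfl⟩
        · rw [hF0, hll]; simp [h01]
        · rw [hF0, hF1, hln]; simp
        · rw [hF0, hFm, hlm]; simp [succ_succ_ne_one j]
      · refine ⟨i.succ.succ, fun t' => ?_⟩
        rcases fin_cases3 t' with rfl | rfl | ⟨j, rfl⟩
        · rw [hFm, hF0, mip_symm, hlm]
          simp [(Fin.succ_ne_zero _ : (Fin.succ (Fin.succ i)) ≠ 0).symm]
        · rw [hFm, hF1, mip_symm, hnm]; simp [(succ_succ_ne_one i).symm]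
        · rw [hFm, hFm, hmm]
          by_cases hji : j = i
          · subst hji; simp
          · have h2 : Fin.succ (Fin.succ j) ≠ Fin.succ (Fin.succ i) :=
              fun h => hji (by rwa [Fin.succ_inj, Fin.succ_inj] at h)
            simp [h2, Ne.symm hji]
    have hmip0 : ∀ u : Fin (kk+2) → ℝ, mip u 0 = 0 := by
      intro u; simp [mip]
    have hind : LinearIndependent ℝ F := by
      rw [Fintype.linearIndependent_iff]
      intro g hg t
      obtain ⟨s, hs⟩ := hdual t
      have h1 := congrArg (mip (F s)) hg
      rw [expandF (mip (F s)) (mip_add (F s)) (mip_smul (F s)) g F, hmip0] at h1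
      simpa [hs] using h1
    have hcard : Fintype.card (Fin (kk+2)) = Module.finrank ℝ (Fin (kk+2) → ℝ) := by
      simp [Module.finrank_fin_fun]
    let b := basisOfLinearIndependentOfCardEqFinrank hind hcard
    have hbF : ∀ t, b t = F t := by
      intro t; rw [coe_basisOfLinearIndependentOfCardEqFinrank]
    have hrep : ∀ v : Fin (kk+2) → ℝ, v = ∑ t, b.repr v t • F t := by
      intro v
      conv_lhs => rw [← b.sum_repr v]
      exact Finset.sum_congr rfl fun t _ => by rw [hbF]
    rw [← hEstd a e d f, hrep (std a), hrep (std e), hrep (std d), hrep (std f)]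
    exact EE_zero_comb C ℓ F hEF _ _ _ _
end

section
/- The vector space W_n of n-dimensional Weyl-like tensors has dimension (1/12)(n+2)(n+1)n(n−3). -/
open scoped BigOperators

/-- The space `W_n` of Weyl-like tensors on ℝ^n: valence-4 tensors with the
Riemann index symmetries and vanishing trace (with respect to the Minkowski
metric of signature (−,+,...,+)). -/
noncomputable def weylSpace (n : ℕ) :
    Submodule ℝ (MultilinearMap ℝ (fun _ : Fin 4 => (Fin n → ℝ)) ℝ) where
  carrier := {C |
    (∀ a b c d, C ![a, b, c, d] = - C ![b, a, c, d]) ∧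
    (∀ a b c d, C ![a, b, c, d] = C ![c, d, a, b]) ∧
    (∀ a b c d, C ![a, b, c, d] + C ![a, c, d, b] + C ![a, d, b, c] = 0) ∧
    (∀ a c, ∑ b : Fin n,
      (if (b : ℕ) = 0 then (-1 : ℝ) else 1) * C ![a, std b, c, std b] = 0)}
  add_mem' := by
    rintro C D ⟨hA1, hP1, hB1, hT1⟩ ⟨hA2, hP2, hB2, hT2⟩
    refine ⟨fun a b c d => ?_, fun a b c d => ?_, fun a b c d => ?_, fun a c => ?_⟩
    · simp only [MultilinearMap.add_apply, hA1 a b c d, hA2 a b c d]; ring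
    · simp only [MultilinearMap.add_apply, hP1 a b c d, hP2 a b c d]
    · have h1 := hB1 a b c d; have h2 := hB2 a b c d
      simp only [MultilinearMap.add_apply]; linarith
    · have h1 := hT1 a c; have h2 := hT2 a c
      simp only [MultilinearMap.add_apply, mul_add, Finset.sum_add_distrib, h1, h2,
        add_zero]
  zero_mem' := by
    refine ⟨fun a b c d => ?_, fun a b c d => ?_, fun a b c d => ?_, fun a c => ?_⟩ <;>
      simp
  smul_mem' := by
    rintro r C ⟨hA1, hP1, hB1, hT1⟩
    refine ⟨fun a b c d => ?_, fun a b c d => ?_, fun a b c d => ?_, fun a c => ?_⟩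
    · simp only [MultilinearMap.smul_apply, smul_eq_mul, hA1 a b c d]; ring
    · simp only [MultilinearMap.smul_apply, smul_eq_mul, hP1 a b c d]
    · have h1 := hB1 a b c d
      simp only [MultilinearMap.smul_apply, smul_eq_mul]
      calc r * C ![a, b, c, d] + r * C ![a, c, d, b] + r * C ![a, d, b, c]
          = r * (C ![a, b, c, d] + C ![a, c, d, b] + C ![a, d, b, c]) := by ring
        _ = 0 := by rw [h1, mul_zero]
    · have h1 := hT1 a c
      simp only [MultilinearMap.smul_apply, smul_eq_mul]
      calc ∑ b : Fin n, (if (b : ℕ) = 0 then (-1 : ℝ) else 1) * (r * C ![a, std b, c, std b])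
          = r * ∑ b : Fin n, (if (b : ℕ) = 0 then (-1 : ℝ) else 1) * C ![a, std b, c, std b] := by
            rw [Finset.mul_sum]; congr 1; funext b; ring
        _ = 0 := by rw [h1, mul_zero]
namespace WeylProof

open Finset

variable {n : ℕ}

/-- Coordinate space of 4-index tensors. -/
abbrev F (n : ℕ) := (Fin 4 → Fin n) → ℝ

/-- Coordinate space of 2-index tensors. -/
abbrev G (n : ℕ) := (Fin n × Fin n) → ℝ

/-- Minkowski signs. -/
def eps {n : ℕ} (b : Fin n) : ℝ := if (b : ℕ) = 0 then -1 else 1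

abbrev MM (n : ℕ) := MultilinearMap ℝ (fun _ : Fin 4 => (Fin n → ℝ)) ℝ

/-- Restriction of a multilinear map to basis vectors. -/
noncomputable def fwdMap (n : ℕ) : MM n →ₗ[ℝ] F n where
  toFun C := fun w => C (fun i => std (w i))
  map_add' _ _ := rfl
  map_smul' _ _ := rfl

/-- Reconstruction of a multilinear map from its coordinates. -/
noncomputable def bwdFun (T : F n) : MM n :=
  ∑ p : Fin 4 → Fin n, T p •
    (MultilinearMap.mkPiAlgebra ℝ (Fin 4) ℝ).compLinearMap (fun i => LinearMap.proj (p i))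

lemma bwd_apply (T : F n) (v : Fin 4 → (Fin n → ℝ)) :
    bwdFun T v = ∑ p : Fin 4 → Fin n, T p * ∏ i, v i (p i) := by
  simp [bwdFun]

lemma bwd_std (T : F n) (w : Fin 4 → Fin n) :
    bwdFun T (fun i => std (w i)) = T w := by
  rw [bwd_apply]
  have h : ∀ p : Fin 4 → Fin n, (∏ i, std (w i) (p i)) = if p = w then 1 else 0 := by
    intro p
    have : ∀ i : Fin 4, std (w i) (p i) = if p i = w i then (1:ℝ) else 0 := by
      intro i; simp [std, Pi.single_apply]
    simp_rw [this, Finset.prod_boole]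
    congr 1
    simp [funext_iff]
  simp_rw [h, mul_ite, mul_one, mul_zero]
  simp

lemma bwd_fwd (C : MM n) : bwdFun (fwdMap n C) = C := by
  refine Module.Basis.ext_multilinear (fun _ => Pi.basisFun ℝ (Fin n)) (fun w => ?_)
  have h : (fun i : Fin 4 => (Pi.basisFun ℝ (Fin n)) (w i)) = fun i => std (w i) := by
    funext i; simp [std, Pi.basisFun_apply]
  rw [h, bwd_std]
  rfl

lemma expand4 (T : F n) (a b c d : Fin n → ℝ) :
    bwdFun T ![a, b, c, d] =
      ∑ p : Fin 4 → Fin n, T p * (a (p 0) * b (p 1) * c (p 2) * d (p 3)) := by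
  rw [bwd_apply]
  refine Finset.sum_congr rfl fun p _ => ?_
  rw [Fin.prod_univ_four]
  ring_nf
  rfl

/-- eta for 4-tuples -/
lemma eta4 {α : Type*} (v : Fin 4 → α) : ![v 0, v 1, v 2, v 3] = v := by
  funext i; fin_cases i <;> rfl

/-- precomposition equiv on coordinate indices -/
def pc (τ : Equiv.Perm (Fin 4)) : (Fin 4 → Fin n) ≃ (Fin 4 → Fin n) :=
  (Equiv.arrowCongr τ (Equiv.refl (Fin n))).symm

lemma pc_apply (τ : Equiv.Perm (Fin 4)) (p : Fin 4 → Fin n) : pc τ p = p ∘ ⇑τ := by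
  funext i; simp [pc]

end WeylProof
namespace WeylProof
variable {n : ℕ}
open Finset

/-- tensors antisymmetric in the first pair and symmetric under pair interchange -/
def pairSub (n : ℕ) : Submodule ℝ (F n) where
  carrier := {T | (∀ a b c d, T ![b,a,c,d] = - T ![a,b,c,d]) ∧
    (∀ a b c d, T ![c,d,a,b] = T ![a,b,c,d])}
  add_mem' := by
    rintro T U ⟨h1, h2⟩ ⟨g1, g2⟩
    refine ⟨fun a b c d => ?_, fun a b c d => ?_⟩ <;>
      simp only [Pi.add_apply, h1 a b c d, h2 a b c d, g1 a b c d, g2 a b c d] <;> ring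
  zero_mem' := by refine ⟨fun a b c d => ?_, fun a b c d => ?_⟩ <;> simp
  smul_mem' := by
    rintro r T ⟨h1, h2⟩
    refine ⟨fun a b c d => ?_, fun a b c d => ?_⟩ <;>
      simp only [Pi.smul_apply, smul_eq_mul, h1 a b c d, h2 a b c d] <;> ring

/-- Riemann-symmetric tensors -/
def riemSub (n : ℕ) : Submodule ℝ (F n) where
  carrier := {T | T ∈ pairSub n ∧
    (∀ a b c d, T ![a,b,c,d] + T ![a,c,d,b] + T ![a,d,b,c] = 0)}
  add_mem' := by
    rintro T U ⟨hp, h3⟩ ⟨gp, g3⟩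
    refine ⟨add_mem hp gp, fun a b c d => ?_⟩
    have := h3 a b c d; have := g3 a b c d
    simp only [Pi.add_apply]; linarith
  zero_mem' := ⟨zero_mem _, by intros; simp⟩
  smul_mem' := by
    rintro r T ⟨hp, h3⟩
    refine ⟨Submodule.smul_mem _ r hp, fun a b c d => ?_⟩
    have := h3 a b c d
    simp only [Pi.smul_apply, smul_eq_mul]; linear_combination r * h3 a b c d

/-- Weyl tensors in coordinates -/
def weylSub (n : ℕ) : Submodule ℝ (F n) where
  carrier := {T | T ∈ riemSub n ∧ (∀ a c, ∑ b, eps b * T ![a,b,c,b] = 0)}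
  add_mem' := by
    rintro T U ⟨hp, h4⟩ ⟨gp, g4⟩
    refine ⟨add_mem hp gp, fun a c => ?_⟩
    have := h4 a c; have := g4 a c
    simp only [Pi.add_apply, mul_add, Finset.sum_add_distrib, this]
    simp [h4 a c, g4 a c]
  zero_mem' := ⟨zero_mem _, by intros; simp⟩
  smul_mem' := by
    rintro r T ⟨hp, h4⟩
    refine ⟨Submodule.smul_mem _ r hp, fun a c => ?_⟩
    have h := h4 a c
    simp only [Pi.smul_apply, smul_eq_mul]
    calc ∑ b, eps b * (r * T ![a,b,c,b]) = r * ∑ b, eps b * T ![a,b,c,b] := by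
          rw [Finset.mul_sum]; congr 1; funext b; ring
      _ = 0 := by rw [h, mul_zero]

/-- fully antisymmetric tensors (generated by the three adjacent swaps) -/
def altSub (n : ℕ) : Submodule ℝ (F n) where
  carrier := {T | (∀ a b c d, T ![b,a,c,d] = - T ![a,b,c,d]) ∧
    (∀ a b c d, T ![a,c,b,d] = - T ![a,b,c,d]) ∧
    (∀ a b c d, T ![a,b,d,c] = - T ![a,b,c,d])}
  add_mem' := by
    rintro T U ⟨h1, h2, h3⟩ ⟨g1, g2, g3⟩
    refine ⟨fun a b c d => ?_, fun a b c d => ?_, fun a b c d => ?_⟩ <;>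
      simp only [Pi.add_apply, h1 a b c d, h2 a b c d, h3 a b c d,
        g1 a b c d, g2 a b c d, g3 a b c d] <;> ring
  zero_mem' := by
    refine ⟨fun a b c d => ?_, fun a b c d => ?_, fun a b c d => ?_⟩ <;> simp
  smul_mem' := by
    rintro r T ⟨h1, h2, h3⟩
    refine ⟨fun a b c d => ?_, fun a b c d => ?_, fun a b c d => ?_⟩ <;>
      simp only [Pi.smul_apply, smul_eq_mul, h1 a b c d, h2 a b c d, h3 a b c d] <;> ring

/-- symmetric two-index tensors, generic index type -/
def symSubG (ι : Type*) : Submodule ℝ ((ι × ι) → ℝ) where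
  carrier := {S | ∀ x y, S (x, y) = S (y, x)}
  add_mem' := by rintro S U hS hU x y; simp [hS x y, hU x y]
  zero_mem' := by intro x y; simp
  smul_mem' := by rintro r S hS x y; simp [hS x y]

/-- the (first) Bianchi operator -/
noncomputable def bmap (n : ℕ) : F n →ₗ[ℝ] F n where
  toFun T := fun v => T v + T ![v 0, v 2, v 3, v 1] + T ![v 0, v 3, v 1, v 2]
  map_add' T U := by funext v; simp only [Pi.add_apply]; ring
  map_smul' r T := by funext v; simp only [Pi.smul_apply, smul_eq_mul, RingHom.id_apply]; ring

/-- the trace operator -/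
noncomputable def trmap (n : ℕ) : F n →ₗ[ℝ] G n where
  toFun T := fun q => ∑ b, eps b * T ![q.1, b, q.2, b]
  map_add' T U := by
    funext q; simp only [Pi.add_apply, mul_add, Finset.sum_add_distrib]
  map_smul' r T := by
    funext q
    simp only [Pi.smul_apply, smul_eq_mul, RingHom.id_apply, Finset.mul_sum]
    congr 1; funext b; ring

lemma bmap_apply (T : F n) (a b c d : Fin n) :
    bmap n T ![a,b,c,d] = T ![a,b,c,d] + T ![a,c,d,b] + T ![a,d,b,c] := rfl

lemma trmap_apply (T : F n) (a c : Fin n) :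
    trmap n T (a, c) = ∑ b, eps b * T ![a,b,c,b] := rfl

end WeylProof
namespace WeylProof
variable {n : ℕ}
/-- splitting a 4-tuple index -/
def E4 : (Fin 4 → Fin n) ≃ (Fin n × Fin n × Fin n × Fin n) where
  toFun p := (p 0, p 1, p 2, p 3)
  invFun q := ![q.1, q.2.1, q.2.2.1, q.2.2.2]
  left_inv p := eta4 p
  right_inv q := rfl
end WeylProof
namespace WeylProof
variable {n : ℕ}
open Finset

def σ01 : Equiv.Perm (Fin 4) := ⟨![1,0,2,3], ![1,0,2,3], by decide, by decide⟩
def σpr : Equiv.Perm (Fin 4) := ⟨![2,3,0,1], ![2,3,0,1], by decide, by decide⟩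
def σB2 : Equiv.Perm (Fin 4) := ⟨![0,2,3,1], ![0,3,1,2], by decide, by decide⟩
def σB3 : Equiv.Perm (Fin 4) := ⟨![0,3,1,2], ![0,2,3,1], by decide, by decide⟩

lemma fwd_mem {C : MM n} (hC : C ∈ weylSpace n) : fwdMap n C ∈ weylSub n := by
  obtain ⟨h1, h2, h3, h4⟩ := hC
  have key : ∀ (a b c d : Fin n),
      fwdMap n C ![a,b,c,d] = C ![std a, std b, std c, std d] := by
    intro a b c d
    show C (fun i => std (![a,b,c,d] i)) = _
    congr 1; funext i; fin_cases i <;> rfl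
  refine ⟨⟨⟨fun a b c d => ?_, fun a b c d => ?_⟩, fun a b c d => ?_⟩, fun a c => ?_⟩
  · rw [key, key]; rw [h1 (std b) (std a) (std c) (std d)]
  · rw [key, key]; rw [h2 (std c) (std d) (std a) (std b)]
  · rw [key, key, key]; exact h3 (std a) (std b) (std c) (std d)
  · have := h4 (std a) (std c)
    simpa [eps, key] using this

lemma fwd_bwd (T : F n) : fwdMap n (bwdFun T) = T := by
  funext w
  exact bwd_std T w

lemma bwd_mem {T : F n} (hT : T ∈ weylSub n) : bwdFun T ∈ weylSpace n := by
  obtain ⟨⟨⟨h1, h2⟩, h3⟩, h4⟩ := hT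
  refine ⟨fun a b c d => ?_, fun a b c d => ?_, fun a b c d => ?_, fun a c => ?_⟩
  · -- C ![a,b,c,d] = - C ![b,a,c,d]
    rw [expand4, expand4]
    have e1 : ∑ p : Fin 4 → Fin n, T (p ∘ ⇑σ01) * (a (p 0) * b (p 1) * c (p 2) * d (p 3))
        = ∑ p : Fin 4 → Fin n, T p * (b (p 0) * a (p 1) * c (p 2) * d (p 3)) := by
      refine Fintype.sum_equiv (pc σ01) _ _ (fun p => ?_)
      rw [pc_apply]
      show _ = T (p ∘ ⇑σ01) * (b ((p ∘ ⇑σ01) 0) * a ((p ∘ ⇑σ01) 1) * c ((p ∘ ⇑σ01) 2) * d ((p ∘ ⇑σ01) 3))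
      show _ = T (p ∘ ⇑σ01) * (b (p 1) * a (p 0) * c (p 2) * d (p 3))
      ring
    rw [← e1, ← Finset.sum_neg_distrib]
    refine Finset.sum_congr rfl fun p _ => ?_
    have hp : T (p ∘ ⇑σ01) = - T p := by
      have h := h1 (p 0) (p 1) (p 2) (p 3)
      calc T (p ∘ ⇑σ01) = T ![p 1, p 0, p 2, p 3] := by congr 1; funext i; fin_cases i <;> rfl
        _ = - T ![p 0, p 1, p 2, p 3] := h
        _ = - T p := by rw [eta4]
    rw [hp]; ring
  · -- C ![a,b,c,d] = C ![c,d,a,b]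
    rw [expand4, expand4]
    have e1 : ∑ p : Fin 4 → Fin n, T (p ∘ ⇑σpr) * (a (p 0) * b (p 1) * c (p 2) * d (p 3))
        = ∑ p : Fin 4 → Fin n, T p * (c (p 0) * d (p 1) * a (p 2) * b (p 3)) := by
      refine Fintype.sum_equiv (pc σpr) _ _ (fun p => ?_)
      rw [pc_apply]
      show _ = T (p ∘ ⇑σpr) * (c (p 2) * d (p 3) * a (p 0) * b (p 1))
      ring
    rw [← e1]
    refine Finset.sum_congr rfl fun p _ => ?_
    have hp : T (p ∘ ⇑σpr) = T p := by
      have h := h2 (p 0) (p 1) (p 2) (p 3)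
      calc T (p ∘ ⇑σpr) = T ![p 2, p 3, p 0, p 1] := by congr 1; funext i; fin_cases i <;> rfl
        _ = T ![p 0, p 1, p 2, p 3] := h
        _ = T p := by rw [eta4]
    rw [hp]
  · -- Bianchi
    rw [expand4, expand4, expand4]
    have e2 : ∑ p : Fin 4 → Fin n, T (p ∘ ⇑σB2) * (a (p 0) * b (p 1) * c (p 2) * d (p 3))
        = ∑ p : Fin 4 → Fin n, T p * (a (p 0) * c (p 1) * d (p 2) * b (p 3)) := by
      refine Fintype.sum_equiv (pc σB2) _ _ (fun p => ?_)
      rw [pc_apply]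
      show _ = T (p ∘ ⇑σB2) * (a (p 0) * c (p 2) * d (p 3) * b (p 1))
      ring
    have e3 : ∑ p : Fin 4 → Fin n, T (p ∘ ⇑σB3) * (a (p 0) * b (p 1) * c (p 2) * d (p 3))
        = ∑ p : Fin 4 → Fin n, T p * (a (p 0) * d (p 1) * b (p 2) * c (p 3)) := by
      refine Fintype.sum_equiv (pc σB3) _ _ (fun p => ?_)
      rw [pc_apply]
      show _ = T (p ∘ ⇑σB3) * (a (p 0) * d (p 3) * b (p 1) * c (p 2))
      ring
    rw [← e2, ← e3, ← Finset.sum_add_distrib, ← Finset.sum_add_distrib]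
    refine Finset.sum_eq_zero fun p _ => ?_
    have hb2 : T (p ∘ ⇑σB2) = T ![p 0, p 2, p 3, p 1] := by
      congr 1; funext i; fin_cases i <;> rfl
    have hb3 : T (p ∘ ⇑σB3) = T ![p 0, p 3, p 1, p 2] := by
      congr 1; funext i; fin_cases i <;> rfl
    have h := h3 (p 0) (p 1) (p 2) (p 3)
    rw [eta4] at h
    rw [hb2, hb3]
    linear_combination (a (p 0) * b (p 1) * c (p 2) * d (p 3)) * h
  · -- trace
    have expand_b : ∀ b : Fin n, bwdFun T ![a, std b, c, std b] =
        ∑ p : Fin 4 → Fin n, T p * (a (p 0) * (if p 1 = b then 1 else 0) * c (p 2)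
          * (if p 3 = b then 1 else 0)) := by
      intro b
      rw [expand4]
      refine Finset.sum_congr rfl fun p _ => ?_
      simp [std, Pi.single_apply]
    calc ∑ b : Fin n, (if (b:ℕ) = 0 then (-1:ℝ) else 1) * bwdFun T ![a, std b, c, std b]
        = ∑ b : Fin n, ∑ p : Fin 4 → Fin n, eps b * (T p * (a (p 0) * (if p 1 = b then 1 else 0)
            * c (p 2) * (if p 3 = b then 1 else 0))) := by
          refine Finset.sum_congr rfl fun b _ => ?_
          rw [expand_b, Finset.mul_sum]
          rfl
      _ = ∑ p : Fin 4 → Fin n, ∑ b, eps b * (T p * (a (p 0) * (if p 1 = b then 1 else 0)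
            * c (p 2) * (if p 3 = b then 1 else 0))) := Finset.sum_comm
      _ = ∑ p : Fin 4 → Fin n, (if p 3 = p 1 then eps (p 1) * T p * a (p 0) * c (p 2) else 0) := by
          refine Finset.sum_congr rfl fun p _ => ?_
          rw [Finset.sum_eq_single (p 1)]
          · by_cases h : p 3 = p 1 <;> simp [h] <;> ring
          · intro b _ hb
            have h1 : ¬ (p 1 = b) := fun h => hb h.symm
            simp [h1]
          · simp
      _ = ∑ q : Fin n × Fin n × Fin n × Fin n,
            (if q.2.2.2 = q.2.1 then eps q.2.1 * T ![q.1, q.2.1, q.2.2.1, q.2.2.2] * a q.1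
              * c q.2.2.1 else 0) := by
          refine Fintype.sum_equiv (E4) _ _ (fun p => ?_)
          simp only [E4, Equiv.coe_fn_mk, eta4]
          show _ = if p 3 = p 1 then eps (p 1) * T ![p 0, p 1, p 2, p 3] * a (p 0) * c (p 2) else 0
          rw [eta4]
      _ = 0 := by
          rw [Fintype.sum_prod_type]
          refine Finset.sum_eq_zero fun x _ => ?_
          rw [Fintype.sum_prod_type]
          calc ∑ y : Fin n, ∑ q : Fin n × Fin n,
                (if q.2 = y then eps y * T ![x, y, q.1, q.2] * a x * c q.1 else 0)
              = ∑ y : Fin n, ∑ z : Fin n, eps y * T ![x, y, z, y] * a x * c z := by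
                refine Finset.sum_congr rfl fun y _ => ?_
                rw [Fintype.sum_prod_type]
                refine Finset.sum_congr rfl fun z _ => ?_
                simp
            _ = ∑ z : Fin n, ∑ y : Fin n, eps y * T ![x, y, z, y] * a x * c z := Finset.sum_comm
            _ = 0 := by
                refine Finset.sum_eq_zero fun z _ => ?_
                have h := h4 x z
                calc ∑ y : Fin n, eps y * T ![x, y, z, y] * a x * c z
                    = (∑ y : Fin n, eps y * T ![x, y, z, y]) * (a x * c z) := by
                      rw [Finset.sum_mul]; refine Finset.sum_congr rfl fun y _ => by ring
                  _ = 0 := by rw [h, zero_mul]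

/-- needs E4 before this point -/
def E4' := @E4 n

noncomputable def weylEquiv (n : ℕ) : weylSpace n ≃ₗ[ℝ] weylSub n where
  toFun C := ⟨fwdMap n C.1, fwd_mem C.2⟩
  map_add' C D := Subtype.ext (by simp)
  map_smul' r C := Subtype.ext (by simp)
  invFun T := ⟨bwdFun T.1, bwd_mem T.2⟩
  left_inv C := Subtype.ext (bwd_fwd C.1)
  right_inv T := Subtype.ext (fwd_bwd T.1)

lemma finrank_weyl_eq (n : ℕ) :
    Module.finrank ℝ (weylSpace n) = Module.finrank ℝ (weylSub n) :=
  (weylEquiv n).finrank_eq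

end WeylProof
namespace WeylProof
variable {n : ℕ}
open Finset

lemma finrank_split {V W : Type*} [AddCommGroup V] [Module ℝ V] [AddCommGroup W] [Module ℝ W]
    [FiniteDimensional ℝ V] (φ : V →ₗ[ℝ] W) (A B : Submodule ℝ V) (S : Submodule ℝ W)
    (hB : B = A ⊓ LinearMap.ker φ) (hS : LinearMap.range (φ.comp A.subtype) = S) :
    Module.finrank ℝ A = Module.finrank ℝ S + Module.finrank ℝ B := by
  have h := LinearMap.finrank_range_add_finrank_ker (φ.comp A.subtype)
  rw [hS] at h
  rw [← h]
  congr 1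
  have hker : LinearMap.ker (φ.comp A.subtype) = Submodule.comap A.subtype B := by
    rw [LinearMap.ker_comp, hB, Submodule.comap_inf, Submodule.comap_subtype_self, top_inf_eq]
  rw [hker]
  exact (Submodule.comapSubtypeEquivOfLe (hB ▸ inf_le_left : B ≤ A)).finrank_eq

lemma weylSub_eq (n : ℕ) : weylSub n = riemSub n ⊓ LinearMap.ker (trmap n) := by
  ext T
  constructor
  · rintro ⟨hr, h4⟩
    refine ⟨hr, ?_⟩
    simp only [SetLike.mem_coe, LinearMap.mem_ker]
    funext q
    exact h4 q.1 q.2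
  · rintro ⟨hr, h4⟩
    simp only [SetLike.mem_coe, LinearMap.mem_ker] at h4
    exact ⟨hr, fun a c => congrFun h4 (a, c)⟩

lemma riemSub_eq (n : ℕ) : riemSub n = pairSub n ⊓ LinearMap.ker (bmap n) := by
  ext T
  constructor
  · rintro ⟨hp, h3⟩
    refine ⟨hp, ?_⟩
    simp only [SetLike.mem_coe, LinearMap.mem_ker]
    funext v
    have h := h3 (v 0) (v 1) (v 2) (v 3)
    rw [eta4] at h
    exact h
  · rintro ⟨hp, h3⟩
    simp only [SetLike.mem_coe, LinearMap.mem_ker] at h3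
    exact ⟨hp, fun a b c d => congrFun h3 ![a,b,c,d]⟩

/-- second-pair antisymmetry, derived in `pairSub` -/
lemma pair_second {T : F n} (hT : T ∈ pairSub n) (a b c d : Fin n) :
    T ![a,b,d,c] = - T ![a,b,c,d] := by
  obtain ⟨h1, h2⟩ := hT
  calc T ![a,b,d,c] = T ![d,c,a,b] := h2 d c a b
    _ = - T ![c,d,a,b] := h1 c d a b
    _ = - T ![a,b,c,d] := by rw [h2 a b c d]

lemma bmap_mem_alt {T : F n} (hT : T ∈ pairSub n) : bmap n T ∈ altSub n := by
  obtain ⟨h1, h2⟩ := hT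
  have h1' := fun a b c d => pair_second ⟨h1, h2⟩ a b c d
  refine ⟨fun a b c d => ?_, fun a b c d => ?_, fun a b c d => ?_⟩
  · show T ![b,a,c,d] + T ![b,c,d,a] + T ![b,d,a,c]
      = -(T ![a,b,c,d] + T ![a,c,d,b] + T ![a,d,b,c])
    have f1 := h1 a b c d
    have f2 : T ![b,c,d,a] = - T ![a,d,b,c] := by
      rw [h2 d a b c, h1 a d b c]
    have f3 : T ![b,d,a,c] = - T ![a,c,d,b] := by
      rw [h2 a c b d, h1' a c d b]
    linarith
  · show T ![a,c,b,d] + T ![a,b,d,c] + T ![a,d,c,b]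
      = -(T ![a,b,c,d] + T ![a,c,d,b] + T ![a,d,b,c])
    have f1 := h1' a c d b
    have f2 := h1' a b c d
    have f3 := h1' a d b c
    linarith
  · show T ![a,b,d,c] + T ![a,d,c,b] + T ![a,c,b,d]
      = -(T ![a,b,c,d] + T ![a,c,d,b] + T ![a,d,b,c])
    have f1 := h1' a c d b
    have f2 := h1' a b c d
    have f3 := h1' a d b c
    linarith

lemma alt_mem_pair {S : F n} (hS : S ∈ altSub n) : S ∈ pairSub n := by
  obtain ⟨s1, s2, s3⟩ := hS
  refine ⟨s1, fun a b c d => ?_⟩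
  have f1 := s2 c a d b
  have f2 := s1 a c d b
  have f3 := s3 a c b d
  have f4 := s2 a b c d
  linarith

lemma bmap_of_alt {S : F n} (hS : S ∈ altSub n) : bmap n ((3:ℝ)⁻¹ • S) = S := by
  obtain ⟨s1, s2, s3⟩ := hS
  funext v
  show (3:ℝ)⁻¹ • S v + ((3:ℝ)⁻¹ • S) ![v 0, v 2, v 3, v 1] + ((3:ℝ)⁻¹ • S) ![v 0, v 3, v 1, v 2] = S v
  have g1 : S ![v 0, v 2, v 3, v 1] = S v := by
    have a1 := s2 (v 0) (v 1) (v 2) (v 3)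
    have a2 := s3 (v 0) (v 2) (v 1) (v 3)
    rw [eta4] at a1
    rw [show S ![v 0, v 2, v 3, v 1] = - S ![v 0, v 2, v 1, v 3] from a2]
    linarith
  have g2 : S ![v 0, v 3, v 1, v 2] = S v := by
    have a1 := s3 (v 0) (v 1) (v 2) (v 3)
    have a2 := s2 (v 0) (v 1) (v 3) (v 2)
    rw [eta4] at a1
    rw [show S ![v 0, v 3, v 1, v 2] = - S ![v 0, v 1, v 3, v 2] from a2]
    linarith
  simp only [Pi.smul_apply, smul_eq_mul, g1, g2]
  ring

lemma range_bmap (n : ℕ) :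
    LinearMap.range ((bmap n).comp (pairSub n).subtype) = altSub n := by
  apply le_antisymm
  · rintro S ⟨⟨T, hT⟩, rfl⟩
    exact bmap_mem_alt hT
  · intro S hS
    exact ⟨⟨(3:ℝ)⁻¹ • S, Submodule.smul_mem _ _ (alt_mem_pair hS)⟩, bmap_of_alt hS⟩

end WeylProof
namespace WeylProof
variable {n : ℕ}
open Finset

/-- the Minkowski metric -/
def gm {n : ℕ} (a b : Fin n) : ℝ := if a = b then eps a else 0

lemma gm_symm (a b : Fin n) : gm a b = gm b a := by
  unfold gm
  rcases eq_or_ne a b with h | h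
  · subst h; rfl
  · rw [if_neg h, if_neg (Ne.symm h)]

lemma eps_sq (b : Fin n) : eps b * eps b = 1 := by
  unfold eps; split <;> norm_num

/-- Kulkarni–Nomizu product of the metric with a symmetric 2-tensor -/
def KN (S : G n) : F n := fun v =>
  gm (v 0) (v 2) * S (v 1, v 3) + gm (v 1) (v 3) * S (v 0, v 2)
    - gm (v 0) (v 3) * S (v 1, v 2) - gm (v 1) (v 2) * S (v 0, v 3)

lemma KN_mem {S : G n} (hS : S ∈ symSubG (Fin n)) : KN S ∈ riemSub n := by
  have hs : ∀ x y : Fin n, S (x, y) = S (y, x) := hS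
  refine ⟨⟨fun a b c d => ?_, fun a b c d => ?_⟩, fun a b c d => ?_⟩
  · show gm b c * S (a, d) + gm a d * S (b, c) - gm b d * S (a, c) - gm a c * S (b, d)
      = -(gm a c * S (b, d) + gm b d * S (a, c) - gm a d * S (b, c) - gm b c * S (a, d))
    ring
  · show gm c a * S (d, b) + gm d b * S (c, a) - gm c b * S (d, a) - gm d a * S (c, b)
      = gm a c * S (b, d) + gm b d * S (a, c) - gm a d * S (b, c) - gm b c * S (a, d)
    rw [gm_symm c a, gm_symm d b, gm_symm c b, gm_symm d a, hs d b, hs c a, hs d a, hs c b]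
    ring
  · show (gm a c * S (b, d) + gm b d * S (a, c) - gm a d * S (b, c) - gm b c * S (a, d))
      + (gm a d * S (c, b) + gm c b * S (a, d) - gm a b * S (c, d) - gm c d * S (a, b))
      + (gm a b * S (d, c) + gm d c * S (a, b) - gm a c * S (d, b) - gm d b * S (a, c)) = 0
    rw [hs c b, hs d c, hs d b, gm_symm c b, gm_symm d c, gm_symm d b]
    ring

lemma tr_KN {S : G n} (a c : Fin n) :
    trmap n (KN S) (a, c) =
      (∑ b : Fin n, eps b * S (b, b)) * gm a c + ((n : ℝ) - 2) * S (a, c) := by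
  have step : ∀ b : Fin n, eps b * KN S ![a,b,c,b] =
      eps b * (gm a c * S (b, b)) + eps b * (gm b b * S (a, c))
        - eps b * (gm a b * S (b, c)) - eps b * (gm b c * S (a, b)) := by
    intro b
    show eps b * (gm a c * S (b, b) + gm b b * S (a, c)
      - gm a b * S (b, c) - gm b c * S (a, b)) = _
    ring
  show (∑ b : Fin n, eps b * KN S ![a,b,c,b]) = _
  simp_rw [step]
  rw [Finset.sum_sub_distrib, Finset.sum_sub_distrib, Finset.sum_add_distrib]
  have s1 : ∑ b : Fin n, eps b * (gm a c * S (b, b)) = (∑ b : Fin n, eps b * S (b, b)) * gm a c := by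
    rw [Finset.sum_mul]; exact Finset.sum_congr rfl fun b _ => by ring
  have s2 : ∑ b : Fin n, eps b * (gm b b * S (a, c)) = (n : ℝ) * S (a, c) := by
    have : ∀ b : Fin n, eps b * (gm b b * S (a, c)) = S (a, c) := by
      intro b
      rw [show gm b b = eps b from if_pos rfl, ← mul_assoc, eps_sq, one_mul]
    simp_rw [this]
    rw [Finset.sum_const, Finset.card_univ, Fintype.card_fin, nsmul_eq_mul]
  have s3 : ∑ b : Fin n, eps b * (gm a b * S (b, c)) = S (a, c) := by
    rw [Finset.sum_eq_single a]
    · rw [show gm a a = eps a from if_pos rfl, ← mul_assoc, eps_sq, one_mul]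
    · intro b _ hb
      rw [show gm a b = 0 from if_neg (Ne.symm hb)]
      ring
    · simp
  have s4 : ∑ b : Fin n, eps b * (gm b c * S (a, b)) = S (a, c) := by
    rw [Finset.sum_eq_single c]
    · rw [show gm c c = eps c from if_pos rfl]
      rw [show eps c * (eps c * S (a, c)) = (eps c * eps c) * S (a, c) from by ring,
        eps_sq, one_mul]
    · intro b _ hb
      rw [show gm b c = 0 from if_neg hb]
      ring
    · simp
  rw [s1, s2, s3, s4]
  ring

/-- metric as a 2-tensor -/
def gfun (n : ℕ) : G n := fun q => gm q.1 q.2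

lemma gfun_mem : gfun n ∈ symSubG (Fin n) := fun x y => gm_symm x y

lemma tau_g : ∑ b : Fin n, eps b * gfun n (b, b) = (n : ℝ) := by
  have : ∀ b : Fin n, eps b * gfun n (b, b) = 1 := by
    intro b
    show eps b * gm b b = 1
    rw [show gm b b = eps b from if_pos rfl, eps_sq]
  simp_rw [this]
  rw [Finset.sum_const, Finset.card_univ, Fintype.card_fin, nsmul_eq_mul, mul_one]

lemma range_trmap (hn : 3 ≤ n) :
    LinearMap.range ((trmap n).comp (riemSub n).subtype) = symSubG (Fin n) := by
  have hnR : (3 : ℝ) ≤ (n : ℝ) := by exact_mod_cast hn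
  have h2 : (n : ℝ) - 2 ≠ 0 := by linarith
  have h2' : 2 * (n : ℝ) - 2 ≠ 0 := by linarith
  apply le_antisymm
  · rintro S ⟨⟨T, hT⟩, rfl⟩
    intro x y
    show trmap n T (x, y) = trmap n T (y, x)
    show (∑ b : Fin n, eps b * T ![x,b,y,b]) = ∑ b : Fin n, eps b * T ![y,b,x,b]
    refine Finset.sum_congr rfl fun b _ => ?_
    rw [hT.1.2 x b y b]
  · intro S hS
    have hs : ∀ x y : Fin n, S (x, y) = S (y, x) := hS
    set τ : ℝ := ∑ b : Fin n, eps b * S (b, b) with hτ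
    refine ⟨⟨((n:ℝ)-2)⁻¹ • KN S - (τ / (((n:ℝ)-2) * (2*(n:ℝ)-2))) • KN (gfun n), ?_⟩, ?_⟩
    · exact Submodule.sub_mem _ (Submodule.smul_mem _ _ (KN_mem hS))
        (Submodule.smul_mem _ _ (KN_mem gfun_mem))
    · funext q
      obtain ⟨a, c⟩ := q
      show trmap n (((n:ℝ)-2)⁻¹ • KN S - (τ / (((n:ℝ)-2) * (2*(n:ℝ)-2))) • KN (gfun n)) (a, c)
        = S (a, c)
      rw [map_sub, map_smul, map_smul]
      show ((n:ℝ)-2)⁻¹ * trmap n (KN S) (a,c)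
        - (τ / (((n:ℝ)-2) * (2*(n:ℝ)-2))) * trmap n (KN (gfun n)) (a,c) = S (a, c)
      rw [tr_KN a c, tr_KN a c, tau_g]
      rw [show gfun n (a, c) = gm a c from rfl]
      rw [← hτ]
      have h1' : (n:ℝ) - 1 ≠ 0 := by linarith
      field_simp
      ring
  done

end WeylProof
namespace WeylProof
open Finset

section SymGeneric
variable (ι : Type*) [Fintype ι] [LinearOrder ι]

/-- canonical index set for symmetric tensors -/
abbrev leSet := {p : ι × ι // p.1 ≤ p.2}

noncomputable def symEquiv : symSubG ι ≃ₗ[ℝ] (leSet ι → ℝ) where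
  toFun S := fun p => S.1 p.1
  map_add' S T := rfl
  map_smul' r S := rfl
  invFun f := ⟨fun q => if h : q.1 ≤ q.2 then f ⟨q, h⟩ else f ⟨(q.2, q.1), le_of_not_ge h⟩,
    by
      intro x y
      by_cases hxy : x ≤ y <;> by_cases hyx : y ≤ x
      · have : x = y := le_antisymm hxy hyx
        subst this; rfl
      · simp only [dif_pos hxy, dif_neg hyx]
      · simp only [dif_neg hxy, dif_pos hyx]
      · exact absurd (le_total x y) (by simp [hxy, hyx])⟩
  left_inv S := by
    apply Subtype.ext
    funext q
    by_cases h : q.1 ≤ q.2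
    · simp only [dif_pos h]
    · simp only [dif_neg h]
      exact S.2 q.2 q.1
  right_inv f := by
    funext p
    obtain ⟨⟨x, y⟩, h⟩ := p
    simp only [dif_pos h]

lemma two_mul_card_leSet : 2 * Fintype.card (leSet ι) = Fintype.card ι * (Fintype.card ι + 1) := by
  have h1 : Fintype.card (leSet ι) = Fintype.card (Sym2 ι) :=
    (Fintype.card_congr Sym2.sortEquiv).symm
  rw [h1, Sym2.card, Nat.choose_two_right, Nat.add_sub_cancel]
  have heven : 2 ∣ Fintype.card ι * (Fintype.card ι + 1) := (Nat.even_mul_succ_self _).two_dvd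
  rw [show (Fintype.card ι + 1) * Fintype.card ι = Fintype.card ι * (Fintype.card ι + 1) by ring]
  exact Nat.mul_div_cancel' heven

/-- decomposition of `leSet` into strict part and diagonal -/
def leSetSplit : leSet ι ≃ {p : ι × ι // p.1 < p.2} ⊕ ι where
  toFun p := if h : p.1.1 < p.1.2 then Sum.inl ⟨p.1, h⟩ else Sum.inr p.1.1
  invFun q := q.elim (fun p => ⟨p.1, le_of_lt p.2⟩) (fun x => ⟨(x, x), le_refl x⟩)
  left_inv p := by
    obtain ⟨⟨x, y⟩, h⟩ := p
    by_cases hlt : x < y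
    · simp [dif_pos hlt]
    · have : x = y := le_antisymm h (not_lt.mp hlt)
      subst this
      simp [dif_neg hlt]
  right_inv q := by
    rcases q with ⟨⟨x, y⟩, h⟩ | x
    · exact dif_pos (show x < y from h)
    · simp [dif_neg (lt_irrefl x)]

lemma card_ltSet :
    2 * Fintype.card {p : ι × ι // p.1 < p.2} + 2 * Fintype.card ι
      = Fintype.card ι * (Fintype.card ι + 1) := by
  have h := Fintype.card_congr (leSetSplit ι)
  rw [Fintype.card_sum] at h
  have := two_mul_card_leSet ι
  omega

lemma finrank_symSubG :
    2 * Module.finrank ℝ (symSubG ι) = Fintype.card ι * (Fintype.card ι + 1) := by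
  rw [(symEquiv ι).finrank_eq, Module.finrank_pi]
  exact two_mul_card_leSet ι

end SymGeneric
end WeylProof
namespace WeylProof
variable {n : ℕ}
open Finset

/-- index type: ordered pairs, linearly ordered lexicographically -/
abbrev Jn (n : ℕ) := {p : Lex (Fin n × Fin n) // (ofLex p).1 < (ofLex p).2}

lemma card_Jn : 2 * Fintype.card (Jn n) + 2 * n = n * (n + 1) := by
  have he : Fintype.card (Jn n) = Fintype.card {p : Fin n × Fin n // p.1 < p.2} :=
    Fintype.card_congr
      (Equiv.subtypeEquiv (toLex : (Fin n × Fin n) ≃ _).symm (fun p => Iff.rfl)).symm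
  rw [he]
  have := card_ltSet (Fin n)
  rwa [Fintype.card_fin] at this

/-- signed extension of a symmetric matrix over `Jn` to a 4-tensor -/
def packEntry (M : Jn n × Jn n → ℝ) (a b c d : Fin n) : ℝ :=
  if h1 : a < b then
    (if h2 : c < d then M (⟨toLex (a,b), h1⟩, ⟨toLex (c,d), h2⟩)
     else if h2' : d < c then - M (⟨toLex (a,b), h1⟩, ⟨toLex (d,c), h2'⟩) else 0)
  else if h1' : b < a then
    (if h2 : c < d then - M (⟨toLex (b,a), h1'⟩, ⟨toLex (c,d), h2⟩)
     else if h2' : d < c then M (⟨toLex (b,a), h1'⟩, ⟨toLex (d,c), h2'⟩) else 0)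
  else 0

def pack (M : Jn n × Jn n → ℝ) : F n := fun v => packEntry M (v 0) (v 1) (v 2) (v 3)

def unpack (T : F n) : Jn n × Jn n → ℝ := fun q =>
  T ![(ofLex q.1.1).1, (ofLex q.1.1).2, (ofLex q.2.1).1, (ofLex q.2.1).2]

lemma packEntry_swap1 (M : Jn n × Jn n → ℝ) (a b c d : Fin n) :
    packEntry M b a c d = - packEntry M a b c d := by
  rcases lt_trichotomy a b with h | h | h
  · rcases lt_trichotomy c d with g | g | g
    · simp [packEntry, h, g, h.asymm, g.asymm]
    · subst g; simp [packEntry, h, h.asymm, lt_irrefl]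
    · simp [packEntry, h, g, h.asymm, g.asymm]
  · subst h
    simp [packEntry, lt_irrefl]
  · rcases lt_trichotomy c d with g | g | g
    · simp [packEntry, h, g, h.asymm, g.asymm]
    · subst g; simp [packEntry, h, h.asymm, lt_irrefl]
    · simp [packEntry, h, g, h.asymm, g.asymm]

lemma packEntry_pairswap {M : Jn n × Jn n → ℝ} (hM : M ∈ symSubG (Jn n)) (a b c d : Fin n) :
    packEntry M c d a b = packEntry M a b c d := by
  have hs : ∀ x y : Jn n, M (x, y) = M (y, x) := hM
  rcases lt_trichotomy a b with h | h | h <;> rcases lt_trichotomy c d with g | g | g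
  · simp [packEntry, h, g, h.asymm, g.asymm, hs]
  · subst g; simp [packEntry, h, h.asymm, lt_irrefl]
  · simp [packEntry, h, g, h.asymm, g.asymm, hs]
  · subst h; simp [packEntry, g, g.asymm, lt_irrefl]
  · subst h; subst g; simp [packEntry, lt_irrefl]
  · subst h; simp [packEntry, g, g.asymm, lt_irrefl]
  · simp [packEntry, h, g, h.asymm, g.asymm, hs]
  · subst g; simp [packEntry, h, h.asymm, lt_irrefl]
  · simp [packEntry, h, g, h.asymm, g.asymm, hs]

lemma pack_mem {M : Jn n × Jn n → ℝ} (hM : M ∈ symSubG (Jn n)) : pack M ∈ pairSub n :=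
  ⟨fun a b c d => packEntry_swap1 M a b c d, fun a b c d => packEntry_pairswap hM a b c d⟩

lemma zero_first {T : F n} (hT : T ∈ pairSub n) (a c d : Fin n) : T ![a,a,c,d] = 0 := by
  have := hT.1 a a c d
  linarith

lemma zero_second {T : F n} (hT : T ∈ pairSub n) (a b c : Fin n) : T ![a,b,c,c] = 0 := by
  have := pair_second hT a b c c
  linarith

lemma pack_unpack {T : F n} (hT : T ∈ pairSub n) : pack (unpack T) = T := by
  funext v
  show packEntry (unpack T) (v 0) (v 1) (v 2) (v 3) = T v
  rw [show T v = T ![v 0, v 1, v 2, v 3] from (congrArg T (eta4 v)).symm]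
  generalize v 0 = a; generalize v 1 = b; generalize v 2 = c; generalize v 3 = d
  rcases lt_trichotomy a b with h | h | h <;> rcases lt_trichotomy c d with g | g | g
  · simp only [packEntry, dif_pos h, dif_pos g]; rfl
  · subst g
    simp only [packEntry, dif_pos h, dif_neg (lt_irrefl c)]
    exact (zero_second hT a b c).symm
  · simp only [packEntry, dif_pos h, dif_neg g.asymm, dif_pos g]
    have := pair_second hT a b d c
    show - T ![a,b,d,c] = T ![a,b,c,d]
    linarith
  · subst h
    simp only [packEntry, dif_neg (lt_irrefl a)]
    exact (zero_first hT a c d).symm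
  · subst h; subst g
    simp only [packEntry, dif_neg (lt_irrefl a)]
    exact (zero_first hT a c c).symm
  · subst h
    simp only [packEntry, dif_neg (lt_irrefl a)]
    exact (zero_first hT a c d).symm
  · simp only [packEntry, dif_neg h.asymm, dif_pos h, dif_pos g]
    have := hT.1 b a c d
    show - T ![b,a,c,d] = T ![a,b,c,d]
    linarith
  · subst g
    simp only [packEntry, dif_neg h.asymm, dif_pos h, dif_neg (lt_irrefl c)]
    exact (zero_second hT a b c).symm
  · simp only [packEntry, dif_neg h.asymm, dif_pos h, dif_neg g.asymm, dif_pos g]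
    have e1 := hT.1 b a d c
    have e2 := pair_second hT a b d c
    show T ![b,a,d,c] = T ![a,b,c,d]
    linarith

lemma unpack_mem {T : F n} (hT : T ∈ pairSub n) : unpack T ∈ symSubG (Jn n) := by
  intro x y
  exact (hT.2 (ofLex x.1).1 (ofLex x.1).2 (ofLex y.1).1 (ofLex y.1).2).symm

lemma unpack_pack (M : Jn n × Jn n → ℝ) : unpack (pack M) = M := by
  funext q
  obtain ⟨⟨x, hx⟩, ⟨y, hy⟩⟩ := q
  show packEntry M (ofLex x).1 (ofLex x).2 (ofLex y).1 (ofLex y).2 = M (⟨x, hx⟩, ⟨y, hy⟩)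
  simp only [packEntry, dif_pos hx, dif_pos hy]
  rfl

noncomputable def pairEquiv (n : ℕ) : pairSub n ≃ₗ[ℝ] symSubG (Jn n) where
  toFun T := ⟨unpack T.1, unpack_mem T.2⟩
  map_add' T U := Subtype.ext rfl
  map_smul' r T := Subtype.ext rfl
  invFun M := ⟨pack M.1, pack_mem M.2⟩
  left_inv T := Subtype.ext (pack_unpack T.2)
  right_inv M := Subtype.ext (unpack_pack M.1)

lemma finrank_pairSub :
    2 * Module.finrank ℝ (pairSub n)
      = Fintype.card (Jn n) * (Fintype.card (Jn n) + 1) := by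
  rw [(pairEquiv n).finrank_eq]
  exact finrank_symSubG (Jn n)

end WeylProof
namespace WeylProof
variable {n : ℕ}
open Finset Equiv

/-- strictly increasing 4-tuples -/
abbrev SM (n : ℕ) := {v : Fin 4 → Fin n // StrictMono v}

def smEquiv (n : ℕ) : SM n ≃ {s : Finset (Fin n) // s.card = 4} where
  toFun v := ⟨Finset.image v.1 Finset.univ, by
    rw [Finset.card_image_of_injective _ v.2.injective, Finset.card_univ, Fintype.card_fin]⟩
  invFun s := ⟨⇑(s.1.orderEmbOfFin s.2), (s.1.orderEmbOfFin s.2).strictMono⟩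
  left_inv v := Subtype.ext
    ((Finset.orderEmbOfFin_unique _ (fun x => Finset.mem_image_of_mem _ (Finset.mem_univ x))
      v.2).symm)
  right_inv s := Subtype.ext (by
    apply Finset.coe_injective
    rw [Finset.coe_image, Finset.coe_univ, Set.image_univ, Finset.range_orderEmbOfFin])

lemma card_SM : Fintype.card (SM n) = n.choose 4 := by
  rw [Fintype.card_congr (smEquiv n), Fintype.card_finset_len, Fintype.card_fin]

/-- signed extension of a function on increasing tuples to an alternating tensor -/
noncomputable def aext (f : SM n → ℝ) : F n := fun v =>
  ∑ σ : Equiv.Perm (Fin 4), ((Equiv.Perm.sign σ : ℤ) : ℝ) *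
    (if h : StrictMono (v ∘ ⇑σ) then f ⟨v ∘ ⇑σ, h⟩ else 0)

lemma sign_sq (τ : Equiv.Perm (Fin 4)) :
    ((Equiv.Perm.sign τ : ℤ) : ℝ) * ((Equiv.Perm.sign τ : ℤ) : ℝ) = 1 := by
  rcases Int.units_eq_one_or (Equiv.Perm.sign τ) with h | h <;> rw [h] <;> norm_num

lemma aext_comp (f : SM n → ℝ) (v : Fin 4 → Fin n) (τ : Equiv.Perm (Fin 4)) :
    aext f (v ∘ ⇑τ) = ((Equiv.Perm.sign τ : ℤ) : ℝ) * aext f v := by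
  unfold aext
  rw [Finset.mul_sum]
  refine Fintype.sum_equiv (Equiv.mulLeft τ) _ _ (fun σ => ?_)
  show ((Equiv.Perm.sign σ : ℤ) : ℝ) *
      (if h : StrictMono (v ∘ ⇑(τ * σ)) then f ⟨v ∘ ⇑(τ * σ), h⟩ else 0)
    = ((Equiv.Perm.sign τ : ℤ) : ℝ) * (((Equiv.Perm.sign (τ * σ) : ℤ) : ℝ) *
      (if h : StrictMono (v ∘ ⇑(τ * σ)) then f ⟨v ∘ ⇑(τ * σ), h⟩ else 0))
  generalize (if h : StrictMono (v ∘ ⇑(τ * σ)) then f ⟨v ∘ ⇑(τ * σ), h⟩ else 0) = X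
  rw [show Equiv.Perm.sign (τ * σ) = Equiv.Perm.sign τ * Equiv.Perm.sign σ from
    Equiv.Perm.sign_mul τ σ, Units.val_mul]
  push_cast
  have hs := sign_sq τ
  linear_combination (-(((Equiv.Perm.sign σ : ℤ) : ℝ) * X)) * hs

lemma strictMono_perm_eq_one : ∀ σ : Equiv.Perm (Fin 4), StrictMono ⇑σ → σ = 1 := by
  decide

lemma aext_strictMono (f : SM n → ℝ) (w : SM n) : aext f w.1 = f w := by
  unfold aext
  rw [Finset.sum_eq_single 1]
  · simp only [map_one, Units.val_one, Int.cast_one, one_mul]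
    rw [dif_pos (show StrictMono (w.1 ∘ ⇑(1 : Equiv.Perm (Fin 4))) from w.2)]
    exact congrArg f (Subtype.ext rfl)
  · intro σ _ hσ
    rw [dif_neg, mul_zero]
    intro h
    apply hσ
    apply strictMono_perm_eq_one
    intro x y hxy
    have := h hxy
    exact w.2.lt_iff_lt.mp this
  · simp

end WeylProof
namespace WeylProof
variable {n : ℕ}
open Finset Equiv

lemma comp_swap01 {α : Type*} (v : Fin 4 → α) :
    v ∘ ⇑(Equiv.swap (0:Fin 4) 1) = ![v 1, v 0, v 2, v 3] := by
  funext k; fin_cases k <;> exact congrArg v (by decide)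

lemma comp_swap12 {α : Type*} (v : Fin 4 → α) :
    v ∘ ⇑(Equiv.swap (1:Fin 4) 2) = ![v 0, v 2, v 1, v 3] := by
  funext k; fin_cases k <;> exact congrArg v (by decide)

lemma comp_swap23 {α : Type*} (v : Fin 4 → α) :
    v ∘ ⇑(Equiv.swap (2:Fin 4) 3) = ![v 0, v 1, v 3, v 2] := by
  funext k; fin_cases k <;> exact congrArg v (by decide)

lemma alt_swap {S : F n} (hS : S ∈ altSub n) :
    ∀ x y : Fin 4, x ≠ y → ∀ v : Fin 4 → Fin n, S (v ∘ ⇑(Equiv.swap x y)) = - S v := by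
  obtain ⟨s1, s2, s3⟩ := hS
  have w01 : ∀ v : Fin 4 → Fin n, S (v ∘ ⇑(Equiv.swap (0:Fin 4) 1)) = - S v := by
    intro v
    rw [comp_swap01 v]
    have h := s1 (v 0) (v 1) (v 2) (v 3)
    rwa [eta4] at h
  have w12 : ∀ v : Fin 4 → Fin n, S (v ∘ ⇑(Equiv.swap (1:Fin 4) 2)) = - S v := by
    intro v
    rw [comp_swap12 v]
    have h := s2 (v 0) (v 1) (v 2) (v 3)
    rwa [eta4] at h
  have w23 : ∀ v : Fin 4 → Fin n, S (v ∘ ⇑(Equiv.swap (2:Fin 4) 3)) = - S v := by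
    intro v
    rw [comp_swap23 v]
    have h := s3 (v 0) (v 1) (v 2) (v 3)
    rwa [eta4] at h
  have w02 : ∀ v : Fin 4 → Fin n, S (v ∘ ⇑(Equiv.swap (0:Fin 4) 2)) = - S v := by
    intro v
    have hv : v ∘ ⇑(Equiv.swap (0:Fin 4) 2) = ![v 2, v 1, v 0, v 3] := by
      funext k; fin_cases k <;> exact congrArg v (by decide)
    rw [hv]
    have e1 := s1 (v 1) (v 2) (v 0) (v 3)   -- S![v2,v1,v0,v3] = -S![v1,v2,v0,v3]
    have e2 := s2 (v 1) (v 0) (v 2) (v 3)   -- S![v1,v2,v0,v3] = -S![v1,v0,v2,v3]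
    have e3 := s1 (v 0) (v 1) (v 2) (v 3)   -- S![v1,v0,v2,v3] = -S![v0,v1,v2,v3]
    have h := eta4 v
    rw [h] at e3
    linarith
  have w13 : ∀ v : Fin 4 → Fin n, S (v ∘ ⇑(Equiv.swap (1:Fin 4) 3)) = - S v := by
    intro v
    have hv : v ∘ ⇑(Equiv.swap (1:Fin 4) 3) = ![v 0, v 3, v 2, v 1] := by
      funext k; fin_cases k <;> exact congrArg v (by decide)
    rw [hv]
    have e1 := s2 (v 0) (v 2) (v 3) (v 1)   -- S![v0,v3,v2,v1] = -S![v0,v2,v3,v1]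
    have e2 := s3 (v 0) (v 2) (v 1) (v 3)   -- S![v0,v2,v3,v1] = -S![v0,v2,v1,v3]
    have e3 := s2 (v 0) (v 1) (v 2) (v 3)   -- S![v0,v2,v1,v3] = -S![v0,v1,v2,v3]
    have h := eta4 v
    rw [h] at e3
    linarith
  have w03 : ∀ v : Fin 4 → Fin n, S (v ∘ ⇑(Equiv.swap (0:Fin 4) 3)) = - S v := by
    intro v
    have hv : v ∘ ⇑(Equiv.swap (0:Fin 4) 3) = ![v 3, v 1, v 2, v 0] := by
      funext k; fin_cases k <;> exact congrArg v (by decide)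
    rw [hv]
    have e1 := s1 (v 1) (v 3) (v 2) (v 0)   -- S![v3,v1,v2,v0] = -S![v1,v3,v2,v0]
    have e2 := s2 (v 1) (v 2) (v 3) (v 0)   -- S![v1,v3,v2,v0] = -S![v1,v2,v3,v0]
    have e3 := s3 (v 1) (v 2) (v 0) (v 3)   -- S![v1,v2,v3,v0] = -S![v1,v2,v0,v3]
    have e4 := s2 (v 1) (v 0) (v 2) (v 3)   -- S![v1,v2,v0,v3] = -S![v1,v0,v2,v3]
    have e5 := s1 (v 0) (v 1) (v 2) (v 3)   -- S![v1,v0,v2,v3] = -S![v0,v1,v2,v3]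
    have h := eta4 v
    rw [h] at e5
    linarith
  intro x y hxy v
  fin_cases x <;> fin_cases y <;> first
    | exact absurd rfl hxy
    | exact w01 v
    | exact w12 v
    | exact w23 v
    | exact w02 v
    | exact w13 v
    | exact w03 v
    | (rw [Equiv.swap_comm]; first
        | exact w01 v
        | exact w12 v
        | exact w23 v
        | exact w02 v
        | exact w13 v
        | exact w03 v)

lemma alt_perm {S : F n} (hS : S ∈ altSub n) (σ : Equiv.Perm (Fin 4)) (v : Fin 4 → Fin n) :
    S (v ∘ ⇑σ) = ((Equiv.Perm.sign σ : ℤ) : ℝ) * S v := by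
  revert v
  refine Equiv.Perm.swap_induction_on σ (fun v => by simp) ?_
  intro f x y hxy ih v
  have hcomp : v ∘ ⇑(Equiv.swap x y * f) = (v ∘ ⇑(Equiv.swap x y)) ∘ ⇑f := rfl
  rw [hcomp, ih, alt_swap hS x y hxy v, Equiv.Perm.sign_mul,
    Equiv.Perm.sign_swap hxy, Units.val_mul]
  push_cast
  ring

lemma alt_notinj {S : F n} (hS : S ∈ altSub n) (v : Fin 4 → Fin n)
    (hv : ¬ Function.Injective v) : S v = 0 := by
  unfold Function.Injective at hv
  push_neg at hv
  obtain ⟨i, j, hij, hne⟩ := hv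
  have hfix : v ∘ ⇑(Equiv.swap i j) = v := by
    funext k
    rcases eq_or_ne k i with rfl | hki
    · simp [Equiv.swap_apply_left, hij.symm]
    · rcases eq_or_ne k j with rfl | hkj
      · simp [Equiv.swap_apply_right, hij]
      · simp [Equiv.swap_apply_of_ne_of_ne hki hkj]
  have := alt_swap hS i j hne v
  rw [hfix] at this
  linarith

lemma aext_mem (f : SM n → ℝ) : aext f ∈ altSub n := by
  have key : ∀ (x y : Fin 4) (hxy : x ≠ y) (v : Fin 4 → Fin n),
      aext f (v ∘ ⇑(Equiv.swap x y)) = - aext f v := by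
    intro x y hxy v
    rw [aext_comp f v (Equiv.swap x y), Equiv.Perm.sign_swap hxy]
    push_cast
    ring
  refine ⟨fun a b c d => ?_, fun a b c d => ?_, fun a b c d => ?_⟩
  · have h := key 0 1 (by decide) ![a,b,c,d]
    rw [comp_swap01 ![a,b,c,d]] at h
    exact h
  · have h := key 1 2 (by decide) ![a,b,c,d]
    rw [comp_swap12 ![a,b,c,d]] at h
    exact h
  · have h := key 2 3 (by decide) ![a,b,c,d]
    rw [comp_swap23 ![a,b,c,d]] at h
    exact h

lemma aext_eq {S : F n} (hS : S ∈ altSub n) : aext (fun w => S w.1) = S := by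
  funext v
  by_cases hv : Function.Injective v
  · set s : Finset (Fin n) := Finset.image v Finset.univ with hsdef
    have hs : s.card = 4 := by
      rw [hsdef, Finset.card_image_of_injective _ hv, Finset.card_univ, Fintype.card_fin]
    set w : Fin 4 → Fin n := ⇑(s.orderEmbOfFin hs) with hwdef
    have hw : StrictMono w := (s.orderEmbOfFin hs).strictMono
    have hrange : Set.range v = Set.range w := by
      rw [hwdef, Finset.range_orderEmbOfFin, hsdef, Finset.coe_image, Finset.coe_univ,
        Set.image_univ]
    let π : Equiv.Perm (Fin 4) :=
      (Equiv.ofInjective v hv).trans ((Equiv.setCongr hrange).trans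
        (Equiv.ofInjective w hw.injective).symm)
    have hπ : ∀ k, w (π k) = v k := by
      intro k
      show w ((Equiv.ofInjective w hw.injective).symm ⟨v k, _⟩) = v k
      exact congrArg Subtype.val
        (Equiv.apply_symm_apply (Equiv.ofInjective w hw.injective) ⟨v k, hrange ▸ ⟨k, rfl⟩⟩)
    have hv_eq : v = w ∘ ⇑π := by
      funext k; exact (hπ k).symm
    rw [hv_eq, alt_perm hS π w, aext_comp, aext_strictMono (fun w => S w.1) ⟨w, hw⟩]
  · rw [alt_notinj (aext_mem (fun w => S w.1)) v hv, alt_notinj hS v hv]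

noncomputable def altEquiv (n : ℕ) : altSub n ≃ₗ[ℝ] (SM n → ℝ) where
  toFun S := fun w => S.1 w.1
  map_add' S T := rfl
  map_smul' r S := rfl
  invFun f := ⟨aext f, aext_mem f⟩
  left_inv S := Subtype.ext (aext_eq S.2)
  right_inv f := funext fun w => aext_strictMono f w

lemma finrank_altSub : Module.finrank ℝ (altSub n) = n.choose 4 := by
  rw [(altEquiv n).finrank_eq, Module.finrank_pi, card_SM]

end WeylProof
namespace WeylProof

lemma choose_four_mul (n : ℕ) : n.choose 4 * 24 = n * (n-1) * (n-2) * (n-3) := by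
  have h := Nat.descFactorial_eq_factorial_mul_choose n 4
  have h4 : Nat.factorial 4 = 24 := rfl
  have hd : Nat.descFactorial n 4 = (n-3) * ((n-2) * ((n-1) * (n * 1))) := rfl
  rw [h4] at h
  rw [hd] at h
  rw [Nat.mul_comm (n.choose 4) 24, ← h]
  ring

lemma main (n : ℕ) (hn : 3 ≤ n) :
    12 * Module.finrank ℝ (weylSpace n) = (n+2) * (n+1) * n * (n-3) := by
  classical
  -- rank-nullity splittings
  have h1 := finrank_split (bmap n) (pairSub n) (riemSub n) (altSub n)
    (riemSub_eq n) (range_bmap n)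
  have h2 := finrank_split (trmap n) (riemSub n) (weylSub n) (symSubG (Fin n))
    (weylSub_eq n) (range_trmap hn)
  have h3 := finrank_symSubG (Fin n)
  rw [Fintype.card_fin] at h3
  have h4 := @finrank_altSub n
  have h5 := @finrank_pairSub n
  have h6 := @card_Jn n
  have h7 := finrank_weyl_eq n
  -- pass to rationals
  set W := Module.finrank ℝ (weylSub n) with hW
  set R := Module.finrank ℝ (riemSub n) with hR
  set P := Module.finrank ℝ (pairSub n) with hP
  set A := Module.finrank ℝ (altSub n) with hA
  set S := Module.finrank ℝ (symSubG (Fin n) : Submodule ℝ (G n)) with hS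
  set c := Fintype.card (Jn n) with hc
  rw [h7]
  have hq1 : (P : ℚ) = (A : ℚ) + (R : ℚ) := by exact_mod_cast h1
  have hq2 : (R : ℚ) = (S : ℚ) + (W : ℚ) := by exact_mod_cast h2
  have hq3 : 2 * (S : ℚ) = (n : ℚ) * ((n : ℚ) + 1) := by exact_mod_cast h3
  have hq4 : 24 * (A : ℚ) = (n : ℚ) * ((n : ℚ) - 1) * ((n : ℚ) - 2) * ((n : ℚ) - 3) := by
    have hnat := choose_four_mul n
    rw [← h4] at hnat
    have : ((A * 24 : ℕ) : ℚ) = ((n * (n-1) * (n-2) * (n-3) : ℕ) : ℚ) := by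
      exact_mod_cast hnat
    push_cast [Nat.cast_sub (show 1 ≤ n by omega), Nat.cast_sub (show 2 ≤ n by omega),
      Nat.cast_sub (show 3 ≤ n by omega)] at this
    linarith
  have hq5 : 2 * (P : ℚ) = (c : ℚ) * ((c : ℚ) + 1) := by exact_mod_cast h5
  have hq6 : 2 * (c : ℚ) + 2 * (n : ℚ) = (n : ℚ) * ((n : ℚ) + 1) := by exact_mod_cast h6
  have e8 : 8 * (P : ℚ) = ((n:ℚ)^2 - n) * (((n:ℚ)^2 - n) + 2) := by
    linear_combination 4 * hq5 + (2 * (c:ℚ) + ((n:ℚ)^2 - (n:ℚ)) + 2) * hq6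
  have goalq : 12 * (W : ℚ) = ((n:ℚ) + 2) * ((n:ℚ) + 1) * (n:ℚ) * ((n:ℚ) - 3) := by
    linear_combination (-12 : ℚ) * hq2 + (-12 : ℚ) * hq1 + (3/2 : ℚ) * e8
      + (-1/2 : ℚ) * hq4 + (-6 : ℚ) * hq3
  have : ((12 * W : ℕ) : ℚ) = (((n+2) * (n+1) * n * (n-3) : ℕ) : ℚ) := by
    push_cast [Nat.cast_sub (show 3 ≤ n by omega)]
    linarith
  exact_mod_cast this

end WeylProof

/-- `dim W_n = (1/12)(n+2)(n+1)n(n−3)`. -/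
theorem weylSpace_finrank (n : ℕ) (hn : 3 ≤ n) :
    12 * Module.finrank ℝ (weylSpace n) = (n+2) * (n+1) * n * (n-3) := by
  exact WeylProof.main n hn
end
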